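/- arXiv:math/0510235 — 8 statements merged into one kernel-verified Lean document; each statement's English description precedes it below -/
import Mathlib

section
/- Let (R, D) be a Δ-ring and let S be a multiplicative subset of R. Then there exists a unique higher derivation D' = (D'_i)_{i∈ℕ} on the localization S⁻¹R extending D, i.e. a unique sequence of additive maps D'_i : S⁻¹R → S⁻¹R with D'_0 = id, satisfying the Leibniz rule, and such that D'_i(r/1) = D_i(r)/1 for all r ∈ R and all i ∈ ℕ. -/
open Finset

section Aux

variable {R : Type*} [CommRing R] (D : ℕ → R → R)

lemma aux_D_zero (hadd : ∀ i (a b : R), D i (a + b) = D i a + D i b) (k : ℕ) :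
    D k 0 = 0 := by
  have := hadd k 0 0
  rw [add_zero] at this
  exact add_eq_right.mp this.symm

lemma aux_D_one (hD0 : D 0 = id)
    (hleib : ∀ k (a b : R), D k (a * b) = ∑ i ∈ Finset.range (k + 1), D i a * D (k - i) b)
    : ∀ k, 0 < k → D k 1 = 0 := by
  intro k
  induction k using Nat.strong_induction_on with
  | _ k ih =>
    intro hk
    obtain ⟨m, rfl⟩ := Nat.exists_eq_succ_of_ne_zero hk.ne'
    have h := hleib (m + 1) 1 1
    rw [mul_one] at h
    rw [Finset.sum_range_succ, Finset.sum_range_succ'] at h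
    have hmid : ∀ i ∈ Finset.range m, D (i + 1) 1 * D (m + 1 - (i + 1)) 1 = 0 := by
      intro i hi
      rw [ih (i + 1) (by simpa using Nat.succ_lt_succ (Finset.mem_range.mp hi))
        (Nat.succ_pos i), zero_mul]
    rw [Finset.sum_eq_zero hmid] at h
    simp only [hD0, id, Nat.sub_self, Nat.sub_zero, mul_one, one_mul, zero_add] at h
    exact add_eq_right.mp h.symm

/-- The ring hom `R →+* (Localization S)⟦X⟧` attached to a higher derivation. -/
noncomputable def auxPhi (hD0 : D 0 = id)
    (hadd : ∀ i (a b : R), D i (a + b) = D i a + D i b)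
    (hleib : ∀ k (a b : R), D k (a * b) = ∑ i ∈ Finset.range (k + 1), D i a * D (k - i) b)
    (S : Submonoid R) : R →+* PowerSeries (Localization S) where
  toFun r := PowerSeries.mk fun i => algebraMap R (Localization S) (D i r)
  map_one' := by
    ext n
    rcases Nat.eq_zero_or_pos n with rfl | hn
    · simp [hD0]
    · simp [aux_D_one D hD0 hleib n hn, PowerSeries.coeff_one, hn.ne']
  map_mul' a b := by
    ext n
    rw [PowerSeries.coeff_mul, Finset.Nat.sum_antidiagonal_eq_sum_range_succ_mk]
    simp [hleib n a b, map_sum]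
  map_zero' := by
    ext n
    simp [aux_D_zero D hadd]
  map_add' a b := by
    ext n
    simp [hadd n a b]

end Aux

/-- a higher derivation on a Δ-ring `(R, D)` extends uniquely to any
localization `S⁻¹R`. -/
theorem stmt_3 {R : Type*} [CommRing R] (D : ℕ → R → R)
    (hD0 : D 0 = id)
    (hadd : ∀ i (a b : R), D i (a + b) = D i a + D i b)
    (hleib : ∀ k (a b : R), D k (a * b) = ∑ i ∈ Finset.range (k + 1), D i a * D (k - i) b)
    (S : Submonoid R) :
    ∃! D' : ℕ → Localization S → Localization S,
      D' 0 = id ∧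
      (∀ i (x y : Localization S), D' i (x + y) = D' i x + D' i y) ∧
      (∀ k (x y : Localization S),
        D' k (x * y) = ∑ i ∈ Finset.range (k + 1), D' i x * D' (k - i) y) ∧
      (∀ i (r : R), D' i (algebraMap R (Localization S) r)
        = algebraMap R (Localization S) (D i r)) := by
  set K := Localization S
  set φ := auxPhi D hD0 hadd hleib S with hφ
  have hφcoeff : ∀ (i : ℕ) (r : R),
      PowerSeries.coeff (R := K) i (φ r) = algebraMap R K (D i r) := by
    intro i r
    simp [hφ, auxPhi]
    rfl
  have hunits : ∀ s : S, IsUnit (φ s) := by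
    intro s
    rw [PowerSeries.isUnit_iff_constantCoeff]
    have : (PowerSeries.constantCoeff (R := K)) (φ s) = algebraMap R K s := by
      simpa [hD0] using hφcoeff 0 s
    rw [this]
    exact IsLocalization.map_units K s
  set Φ := IsLocalization.lift (M := S) (S := K) hunits with hΦ
  have hΦeq : ∀ r : R, Φ (algebraMap R K r) = φ r := fun r =>
    IsLocalization.lift_eq hunits r
  set D' : ℕ → K → K := fun i x => PowerSeries.coeff (R := K) i (Φ x) with hD'
  have hcc : ∀ x : K, PowerSeries.constantCoeff (R := K) (Φ x) = x := by
    have : (PowerSeries.constantCoeff (R := K)).comp Φ = RingHom.id K := by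
      apply IsLocalization.ringHom_ext S
      ext r
      simp only [RingHom.comp_apply, RingHom.id_apply]
      rw [hΦeq]
      simpa [hD0] using hφcoeff 0 r
    intro x
    exact RingHom.congr_fun this x
  have hext : ∀ (i : ℕ) (r : R), D' i (algebraMap R K r) = algebraMap R K (D i r) := by
    intro i r
    simp only [hD']
    rw [hΦeq, hφcoeff]
  have hD'0 : D' 0 = id := by
    funext x
    simp only [hD', PowerSeries.coeff_zero_eq_constantCoeff_apply, id]
    exact hcc x
  have hD'leib : ∀ k (x y : K),
      D' k (x * y) = ∑ i ∈ Finset.range (k + 1), D' i x * D' (k - i) y := by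
    intro k x y
    simp only [hD', map_mul, PowerSeries.coeff_mul,
      Finset.Nat.sum_antidiagonal_eq_sum_range_succ_mk]
  refine ⟨D', ⟨hD'0, ?_, hD'leib, hext⟩, ?_⟩
  · intro i x y
    simp [hD', map_add]
  · -- uniqueness
    rintro E ⟨hE0, hEadd, hEleib, hEext⟩
    funext k
    induction k using Nat.strong_induction_on with
    | _ k ih =>
      funext x
      obtain ⟨⟨r, s⟩, hrs⟩ := IsLocalization.surj S x
      have hsunit : IsUnit (algebraMap R K s) := IsLocalization.map_units K s
      have key : ∀ (F : ℕ → K → K), F 0 = id →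
          (∀ k (x y : K), F k (x * y) = ∑ i ∈ Finset.range (k + 1), F i x * F (k - i) y) →
          (∀ i (r : R), F i (algebraMap R K r) = algebraMap R K (D i r)) →
          F k x * algebraMap R K s =
            algebraMap R K (D k r) -
              ∑ i ∈ Finset.range k, F i x * algebraMap R K (D (k - i) s) := by
        intro F hF0 hFleib hFext
        have h1 := hFleib k x (algebraMap R K s)
        rw [hrs, hFext] at h1
        rw [Finset.sum_range_succ, Nat.sub_self, hF0] at h1
        have h2 : ∀ i ∈ Finset.range k,
            F i x * F (k - i) (algebraMap R K s) =
              F i x * algebraMap R K (D (k - i) s) := by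
          intro i _
          rw [hFext]
        rw [Finset.sum_congr rfl h2] at h1
        simp only [id] at h1
        linear_combination -h1
      have kD := key D' hD'0 hD'leib hext
      have kE := key E hE0 hEleib hEext
      have hIH : ∀ i ∈ Finset.range k, E i x * algebraMap R K (D (k - i) s) =
          D' i x * algebraMap R K (D (k - i) s) := by
        intro i hi
        rw [ih i (Finset.mem_range.mp hi)]
      rw [Finset.sum_congr rfl hIH] at kE
      exact hsunit.mul_left_cancel (by rw [mul_comm, kE, mul_comm, kD])
end

section
/- Let (R, D) be a Δ-ring, let f : R → B be a ring homomorphism, and suppose D extends to a higher derivation D^B on B, i.e. D^B = (D^B_i)_{i∈ℕ} is a sequence of additive maps B → B with D^B_0 = id_B satisfying the Leibniz rule and D^B_i ∘ f = f ∘ D_i for all i. Then for every m ∈ ℕ, the R-algebras B_m = B[t]/(t^{m+1}) (with structure map r ↦ f(r)) and B̃_m are isomorphic as R-algebras. -/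
open Polynomial Finset

set_option maxHeartbeats 1000000 in
theorem aux_stmt5 {B : Type*} [CommRing B] (DB : ℕ → B → B)
    (hDB0 : DB 0 = id)
    (hDBadd : ∀ i (a b : B), DB i (a + b) = DB i a + DB i b)
    (hDBleib : ∀ k (a b : B),
      DB k (a * b) = ∑ i ∈ Finset.range (k + 1), DB i a * DB (k - i) b)
    (m : ℕ) :
    ∃ ψ : (B[X] ⧸ Ideal.span {(X : B[X]) ^ (m + 1)})
        ≃+* (B[X] ⧸ Ideal.span {(X : B[X]) ^ (m + 1)}),
      ∀ b : B,
        ψ (Ideal.Quotient.mk (Ideal.span {(X : B[X]) ^ (m + 1)}) (C b))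
          = ∑ i ∈ Finset.range (m + 1),
              Ideal.Quotient.mk (Ideal.span {(X : B[X]) ^ (m + 1)})
                (C (DB i b) * X ^ i) := by
  classical
  have hDB0' : ∀ b : B, DB 0 b = b := fun b => by rw [hDB0]; rfl
  have hDBzero : ∀ i, DB i (0 : B) = 0 := by
    intro i
    have h := hDBadd i 0 0
    simp only [add_zero] at h
    have : DB i (0:B) + 0 = DB i 0 + DB i 0 := by simpa using h
    exact (add_left_cancel this).symm
  have hDBone : ∀ i, 0 < i → DB i (1 : B) = 0 := by
    intro i
    induction i using Nat.strong_induction_on with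
    | _ k IH =>
      intro hk
      obtain ⟨j, rfl⟩ : ∃ j, k = j + 1 := ⟨k - 1, (Nat.succ_pred_eq_of_pos hk).symm⟩
      have h := hDBleib (j+1) 1 1
      rw [mul_one] at h
      rw [Finset.sum_range_succ, Finset.sum_range_succ'] at h
      have hmid : ∀ i ∈ Finset.range j, DB (i+1) (1:B) * DB (j+1-(i+1)) 1 = 0 := by
        intro i hi
        rw [IH (i+1) (by simp at hi; omega) (Nat.succ_pos i), zero_mul]
      rw [Finset.sum_congr rfl hmid, Finset.sum_const_zero, zero_add,
        Nat.sub_zero, Nat.sub_self, hDB0'] at h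
      -- h : DB (j+1) 1 = 1 * DB (j+1) 1 + DB (j+1) 1 * 1
      rw [one_mul, mul_one] at h
      have : DB (j+1) (1:B) + 0 = DB (j+1) 1 + DB (j+1) 1 := by simpa using h
      exact (add_left_cancel this).symm
  set I : Ideal B[X] := Ideal.span {(X : B[X]) ^ (m + 1)} with hIdef
  set π : B[X] →+* B[X] ⧸ I := Ideal.Quotient.mk I with hπdef
  set tp : B → B[X] := fun b => ∑ i ∈ Finset.range (m + 1), C (DB i b) * X ^ i with htp
  have hcoeff : ∀ (b : B) (n : ℕ), (tp b).coeff n = if n ≤ m then DB n b else 0 := by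
    intro b n
    rw [htp]
    simp only [Polynomial.finset_sum_coeff, Polynomial.coeff_C_mul, Polynomial.coeff_X_pow,
      mul_ite, mul_one, mul_zero]
    rw [Finset.sum_ite_eq (Finset.range (m+1)) n (fun i => DB i b)]
    simp [Nat.lt_succ_iff]
  have htpmul : ∀ a b : B, ((X : B[X]) ^ (m+1)) ∣ (tp a * tp b - tp (a * b)) := by
    intro a b
    rw [Polynomial.X_pow_dvd_iff]
    intro d hd
    have hdm : d ≤ m := Nat.lt_succ_iff.mp hd
    rw [Polynomial.coeff_sub, Polynomial.coeff_mul, hcoeff, if_pos hdm]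
    have : ∀ x ∈ Finset.HasAntidiagonal.antidiagonal d,
        (tp a).coeff x.1 * (tp b).coeff x.2 = DB x.1 a * DB x.2 b := by
      intro x hx
      rw [Finset.HasAntidiagonal.mem_antidiagonal] at hx
      rw [hcoeff, hcoeff, if_pos (le_trans (hx ▸ Nat.le_add_right _ _) hdm),
        if_pos (le_trans (hx ▸ Nat.le_add_left _ _) hdm)]
    rw [Finset.sum_congr rfl this, Finset.Nat.sum_antidiagonal_eq_sum_range_succ_mk,
      hDBleib d a b]
    simp
  have hmemI : ∀ p : B[X], ((X : B[X]) ^ (m+1)) ∣ p → p ∈ I := by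
    intro p hp
    rw [hIdef, Ideal.mem_span_singleton]
    exact hp
  let E : B →+* B[X] ⧸ I :=
  { toFun := fun b => π (tp b)
    map_one' := by
      show π (tp 1) = 1
      have : tp (1 : B) = 1 := by
        show (∑ i ∈ Finset.range (m + 1), C (DB i (1:B)) * X ^ i) = 1
        rw [Finset.sum_eq_single 0]
        · simp [hDB0']
        · intro i _ hi
          rw [hDBone i (Nat.pos_of_ne_zero hi)]; simp
        · simp
      rw [this]; simp
    map_mul' := by
      intro a b
      show π (tp (a * b)) = π (tp a) * π (tp b)
      rw [← map_mul]
      rw [Ideal.Quotient.mk_eq_mk_iff_sub_mem]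
      have := hmemI _ (htpmul a b)
      simpa using (neg_mem this : -(tp a * tp b - tp (a*b)) ∈ I)
    map_zero' := by
      show π (tp 0) = 0
      have : tp (0 : B) = 0 := by
        show (∑ i ∈ Finset.range (m + 1), C (DB i (0:B)) * X ^ i) = 0
        apply Finset.sum_eq_zero; intro i _; rw [hDBzero]; simp
      rw [this]; simp
    map_add' := by
      intro a b
      show π (tp (a + b)) = π (tp a) + π (tp b)
      rw [← map_add]
      congr 1
      show (∑ i ∈ Finset.range (m + 1), C (DB i (a+b)) * X ^ i) = (∑ i ∈ Finset.range (m + 1), C (DB i a) * X ^ i) + (∑ i ∈ Finset.range (m + 1), C (DB i b) * X ^ i)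
      simp only [hDBadd, map_add, add_mul]
      rw [Finset.sum_add_distrib] }
  have hEdef : ∀ b : B, E b = π (tp b) := fun _ => rfl
  let Φ0 : B[X] →+* B[X] ⧸ I := Polynomial.eval₂RingHom E (π X)
  have hΦ0X : Φ0 X = π X := Polynomial.eval₂_X _ _
  have hπXpow : (π X) ^ (m+1) = 0 := by
    rw [← map_pow, Ideal.Quotient.eq_zero_iff_mem]
    exact Ideal.subset_span rfl
  have hker : ∀ a ∈ I, Φ0 a = 0 := by
    intro a ha
    rw [hIdef, Ideal.mem_span_singleton] at ha
    obtain ⟨c, rfl⟩ := ha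
    rw [map_mul, map_pow, hΦ0X, hπXpow]
    simp
  let Φ : B[X] ⧸ I →+* B[X] ⧸ I := Ideal.Quotient.lift I Φ0 hker
  have hΦmk : ∀ p : B[X], Φ (π p) = Φ0 p := fun p => Ideal.Quotient.lift_mk I Φ0 hker
  have hΦC : ∀ b : B, Φ (π (C b)) = π (tp b) := by
    intro b; rw [hΦmk]; exact Polynomial.eval₂_C _ _
  have hΦX : Φ (π X) = π X := by rw [hΦmk]; exact hΦ0X
  -- the key congruence ideal
  set J : Ideal (B[X] ⧸ I) := Ideal.span {π X} with hJdef
  have hJpow : ∀ k : ℕ, J ^ k = Ideal.span {(π X) ^ k} := by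
    intro k; rw [hJdef, Ideal.span_singleton_pow]
  have hJtop : J ^ (m+1) = ⊥ := by
    rw [hJpow, hπXpow, Ideal.span_singleton_eq_bot]
  have hstep1 : ∀ x, Φ x - x ∈ J := by
    intro x
    obtain ⟨p, rfl⟩ := Ideal.Quotient.mk_surjective x
    show Φ (π p) - π p ∈ J
    induction p using Polynomial.induction_on' with
    | add p q hp hq =>
      rw [map_add, map_add]
      have : Φ (π p) + Φ (π q) - (π p + π q) = (Φ (π p) - π p) + (Φ (π q) - π q) := by ring
      rw [this]
      exact add_mem hp hq
    | monomial n b =>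
      rw [← Polynomial.C_mul_X_pow_eq_monomial, map_mul, map_pow, map_mul, map_pow,
        hΦC, hΦX]
      have : π (tp b) * π X ^ n - π (C b) * π X ^ n = (π (tp b) - π (C b)) * π X ^ n := by
        ring
      rw [this]
      apply Ideal.mul_mem_right
      have hdvd : (X : B[X]) ∣ tp b - C b := by
        rw [Polynomial.X_dvd_iff]
        rw [Polynomial.coeff_sub, hcoeff, Polynomial.coeff_C]
        simp [hDB0']
      obtain ⟨c, hc⟩ := hdvd
      have : π (tp b) - π (C b) = π X * π c := by
        rw [← map_mul, ← map_sub, hc]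
      rw [this]
      exact Ideal.mul_mem_right _ _ (Ideal.subset_span rfl)
  have hstep : ∀ (k : ℕ) (x), x ∈ J ^ k → Φ x - x ∈ J ^ (k + 1) := by
    intro k x hx
    rw [hJpow, Ideal.mem_span_singleton] at hx
    obtain ⟨c, rfl⟩ := hx
    rw [map_mul, map_pow, hΦX, mul_comm (π X ^ k) c, mul_comm (π X ^ k) (Φ c)]
    have : Φ c * π X ^ k - c * π X ^ k = (Φ c - c) * π X ^ k := by ring
    rw [this, pow_succ' J k]
    exact Ideal.mul_mem_mul (hstep1 c)
      (by rw [hJpow]; exact Ideal.subset_span rfl)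
  have hinj : Function.Injective Φ := by
    rw [injective_iff_map_eq_zero]
    intro x hx
    have : ∀ k : ℕ, x ∈ J ^ k := by
      intro k
      induction k with
      | zero => simp
      | succ k ih =>
        have := hstep k x ih
        rw [hx, zero_sub] at this
        simpa using (neg_mem this : -(-x) ∈ J ^ (k+1))
    have := this (m+1)
    rw [hJtop] at this
    simpa using this
  have hsurj : Function.Surjective Φ := by
    intro y
    have : ∀ k : ℕ, ∃ x, y - Φ x ∈ J ^ k := by
      intro k
      induction k with
      | zero => exact ⟨0, by simp⟩
      | succ k ih =>
        obtain ⟨x, hx⟩ := ih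
        refine ⟨x + (y - Φ x), ?_⟩
        rw [map_add]
        have h2 := hstep k (y - Φ x) hx
        have : y - (Φ x + Φ (y - Φ x)) = -(Φ (y - Φ x) - (y - Φ x)) := by ring
        rw [this]
        exact neg_mem h2
    obtain ⟨x, hx⟩ := this (m+1)
    rw [hJtop] at hx
    exact ⟨x, by have := Submodule.mem_bot _ |>.mp hx; linear_combination -this⟩
  refine ⟨RingEquiv.ofBijective Φ ⟨hinj, hsurj⟩, ?_⟩
  intro b
  show Φ (π (C b)) = _
  rw [hΦC, htp]
  simp only [map_sum]

/-- if `(R, D)` is a Δ-ring, `f : R → B` a ring homomorphism, and `D`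
extends to a higher derivation `DB` on `B` (i.e. `DB_i ∘ f = f ∘ D_i`), then for every
`m` the `R`-algebras `B_m = B[t]/(t^{m+1})` (structure map `r ↦ f(r)`) and `B̃_m`
(structure map `r ↦ ∑_{i≤m} f(D_i(r)) t^i`) are isomorphic as `R`-algebras. -/
theorem stmt_5 {R B : Type*} [CommRing R] [CommRing B] (D : ℕ → R → R)
    (hD0 : D 0 = id)
    (hadd : ∀ i (a b : R), D i (a + b) = D i a + D i b)
    (hleib : ∀ k (a b : R), D k (a * b) = ∑ i ∈ Finset.range (k + 1), D i a * D (k - i) b)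
    (hiter : ∀ i j (a : R), D i (D j a) = (i + j).choose j • D (i + j) a)
    (f : R →+* B) (DB : ℕ → B → B)
    (hDB0 : DB 0 = id)
    (hDBadd : ∀ i (a b : B), DB i (a + b) = DB i a + DB i b)
    (hDBleib : ∀ k (a b : B),
      DB k (a * b) = ∑ i ∈ Finset.range (k + 1), DB i a * DB (k - i) b)
    (hext : ∀ i (r : R), DB i (f r) = f (D i r))
    (m : ℕ) :
    ∃ ψ : (B[X] ⧸ Ideal.span {(X : B[X]) ^ (m + 1)})
        ≃+* (B[X] ⧸ Ideal.span {(X : B[X]) ^ (m + 1)}),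
      ∀ r : R,
        ψ (Ideal.Quotient.mk (Ideal.span {(X : B[X]) ^ (m + 1)}) (C (f r)))
          = ∑ i ∈ Finset.range (m + 1),
              Ideal.Quotient.mk (Ideal.span {(X : B[X]) ^ (m + 1)})
                (C (f (D i r)) * X ^ i) := by
  obtain ⟨ψ, hψ⟩ := aux_stmt5 DB hDB0 hDBadd hDBleib m
  refine ⟨ψ, fun r => ?_⟩
  rw [hψ (f r)]
  exact Finset.sum_congr rfl (fun i _ => by rw [hext])
end

section
/- Let (K, D) be a field of characteristic 0 equipped with an iterative higher derivation and let L ⊇ K be a field extension. Then for every m ∈ ℕ, the K-algebras L_m = L[t]/(t^{m+1}) (with structure map c ↦ c) and L̃_m are isomorphic as K-algebras. -/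
open Polynomial Finset

universe u

theorem aux_formallySmooth (K L : Type u) [Field K] [Field L] [Algebra K L] [CharZero K] :
    Algebra.FormallySmooth K L := by
  haveI : CharZero L := charZero_of_injective_algebraMap (algebraMap K L).injective
  obtain ⟨s, hs⟩ := exists_isTranscendenceBasis K L
  set M := IntermediateField.adjoin K (Set.range ((↑) : s → L)) with hM
  haveI : Algebra.IsAlgebraic M L := hs.isAlgebraic_field
  haveI : CharZero M := charZero_of_injective_algebraMap (algebraMap K M).injective
  haveI : Algebra.FormallyEtale M L := Algebra.FormallyEtale.of_isSeparable M L
  haveI : Algebra.FormallySmooth (MvPolynomial s K) (FractionRing (MvPolynomial s K)) :=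
    Algebra.FormallySmooth.of_isLocalization (nonZeroDivisors _)
  haveI : Algebra.FormallySmooth K (FractionRing (MvPolynomial s K)) :=
    Algebra.FormallySmooth.comp K (MvPolynomial s K) _
  haveI : Algebra.FormallySmooth K M := Algebra.FormallySmooth.of_equiv hs.1.aevalEquivField
  exact Algebra.FormallySmooth.comp K M L

theorem aux_lift {K L B : Type u} [Field K] [Field L] [Algebra K L] [CharZero K]
    [CommRing B] (τ : K →+* B) (e : B →+* L) (hsurj : Function.Surjective e)
    (hnil : IsNilpotent (RingHom.ker e))
    (hcomp : ∀ c, e (τ c) = algebraMap K L c) :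
    ∃ φ : L →+* B, (∀ c, φ (algebraMap K L c) = τ c) ∧ ∀ a, e (φ a) = a := by
  letI : Algebra K B := τ.toAlgebra
  haveI : Algebra.FormallySmooth K L := aux_formallySmooth K L
  let iso : (B ⧸ RingHom.ker e) ≃+* L := RingHom.quotientKerEquivOfSurjective hsurj
  have hiso : ∀ x : B, iso (Ideal.Quotient.mk _ x) = e x := fun x => RingHom.kerLift_mk e x
  have halg : ∀ c : K, algebraMap K (B ⧸ RingHom.ker e) c
      = Ideal.Quotient.mk (RingHom.ker e) (τ c) := fun c => rfl
  let g : L →ₐ[K] B ⧸ RingHom.ker e :=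
    { toRingHom := (iso.symm : L ≃+* (B ⧸ RingHom.ker e)).toRingHom
      commutes' := fun c => by
        apply iso.injective
        show iso (iso.symm (algebraMap K L c)) = iso (algebraMap K _ c)
        rw [iso.apply_symm_apply, halg, hiso, hcomp] }
  let φ := Algebra.FormallySmooth.lift (RingHom.ker e) hnil g
  have hmk : ∀ a, Ideal.Quotient.mk (RingHom.ker e) (φ a) = g a :=
    fun a => Algebra.FormallySmooth.mk_lift _ hnil g a
  refine ⟨φ.toRingHom, fun c => ?_, fun a => ?_⟩
  · exact φ.commutes c
  · have h2 := congrArg iso (hmk a)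
    rw [hiso] at h2
    rw [AlgHom.toRingHom_eq_coe, RingHom.coe_coe, h2]
    exact iso.apply_symm_apply a

set_option synthInstance.maxHeartbeats 1000000 in
set_option maxHeartbeats 1000000 in
/-- if `(K, D)` is a field of characteristic `0` with an iterative higher
derivation and `L ⊇ K` is a field extension, then for every `m` the `K`-algebras
`L_m = L[t]/(t^{m+1})` (structure map `c ↦ c`) and `L̃_m` (structure map
`c ↦ ∑_{i≤m} D_i(c) t^i`) are isomorphic as `K`-algebras. -/
theorem stmt_6 {K L : Type*} [Field K] [CharZero K] [Field L] [Algebra K L]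
    (D : ℕ → K → K)
    (hD0 : D 0 = id)
    (hadd : ∀ i (a b : K), D i (a + b) = D i a + D i b)
    (hleib : ∀ k (a b : K), D k (a * b) = ∑ i ∈ Finset.range (k + 1), D i a * D (k - i) b)
    (hiter : ∀ i j (a : K), D i (D j a) = (i + j).choose j • D (i + j) a)
    (m : ℕ) :
    ∃ ψ : (L[X] ⧸ Ideal.span {(X : L[X]) ^ (m + 1)})
        ≃+* (L[X] ⧸ Ideal.span {(X : L[X]) ^ (m + 1)}),
      ∀ c : K,
        ψ (Ideal.Quotient.mk (Ideal.span {(X : L[X]) ^ (m + 1)}) (C (algebraMap K L c)))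
          = ∑ i ∈ Finset.range (m + 1),
              Ideal.Quotient.mk (Ideal.span {(X : L[X]) ^ (m + 1)})
                (C (algebraMap K L (D i c)) * X ^ i) := by
  haveI : CharZero L := charZero_of_injective_algebraMap (algebraMap K L).injective
  set J : Ideal L[X] := Ideal.span {(X : L[X]) ^ (m + 1)} with hJ
  set mk : L[X] →+* (L[X] ⧸ J) := Ideal.Quotient.mk J with hmkdef
  -- basic facts about D
  have hD0' : ∀ a, D 0 a = a := fun a => by rw [hD0]; rfl
  have hDzero : ∀ i, D i (0 : K) = 0 := by
    intro i
    have h := hadd i 0 0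
    rw [add_zero] at h
    exact (left_eq_add.mp h)
  have hDone : ∀ k, D k (1 : K) = if k = 0 then 1 else 0 := by
    intro k
    induction k using Nat.strong_induction_on with
    | _ k ih =>
      match k with
      | 0 => simp [hD0']
      | (n+1) =>
        have h := hleib (n+1) 1 1
        rw [mul_one, Finset.sum_range_succ, Finset.sum_range_succ'] at h
        have hz : ∀ i ∈ Finset.range n, D (i+1) (1:K) * D (n + 1 - (i+1)) 1 = 0 := by
          intro i hi
          have hi' := Finset.mem_range.mp hi
          rw [ih (i+1) (by omega)]
          simp [Nat.succ_ne_zero]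
        rw [Finset.sum_eq_zero hz, zero_add, hD0'] at h
        simp only [Nat.sub_zero, Nat.sub_self, hD0'] at h
        rw [one_mul, mul_one] at h
        have hz0 : D (n+1) (1:K) = 0 := right_eq_add.mp h
        simp [hz0]
  -- the truncated Taylor polynomial
  set P : K → L[X] := fun a => ∑ i ∈ Finset.range (m+1), C (algebraMap K L (D i a)) * X^i
    with hP
  have hPco : ∀ a k, k ≤ m → (P a).coeff k = algebraMap K L (D k a) := by
    intro a k hk
    rw [hP]
    simp only [finset_sum_coeff, coeff_C_mul, coeff_X_pow, mul_ite, mul_one, mul_zero]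
    rw [Finset.sum_ite_eq (Finset.range (m+1)) k]
    simp [Nat.lt_succ_iff.mpr hk]
  -- mk only depends on low coefficients
  have hmk_eq : ∀ p q : L[X], (∀ k, k ≤ m → p.coeff k = q.coeff k) → mk p = mk q := by
    intro p q h
    rw [hmkdef, Ideal.Quotient.mk_eq_mk_iff_sub_mem, hJ, Ideal.mem_span_singleton,
      X_pow_dvd_iff]
    intro d hd
    rw [coeff_sub, h d (Nat.lt_succ_iff.mp hd), sub_self]
  -- τ : the twisted structure map
  set τ : K →+* (L[X] ⧸ J) :=
    { toFun := fun a => mk (P a)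
      map_one' := by
        rw [show (1 : L[X] ⧸ J) = mk 1 from rfl]
        apply hmk_eq
        intro k hk
        rw [hPco 1 k hk, hDone, coeff_one]
        split <;> simp
      map_mul' := by
        intro a b
        show mk (P (a*b)) = mk (P a) * mk (P b)
        rw [← map_mul]
        apply hmk_eq
        intro k hk
        rw [hPco _ k hk, coeff_mul, Finset.Nat.sum_antidiagonal_eq_sum_range_succ
          (fun i j => (P a).coeff i * (P b).coeff j), hleib, map_sum]
        apply Finset.sum_congr rfl
        intro i hi
        have hi' : i ≤ k := Nat.lt_succ_iff.mp (Finset.mem_range.mp hi)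
        rw [hPco a i (hi'.trans hk), hPco b (k - i) ((Nat.sub_le k i).trans hk), map_mul]
      map_zero' := by
        show mk (P 0) = mk 0
        apply hmk_eq
        intro k hk
        rw [hPco 0 k hk, hDzero]
        simp
      map_add' := by
        intro a b
        show mk (P (a+b)) = mk (P a) + mk (P b)
        rw [← map_add]
        apply hmk_eq
        intro k hk
        rw [hPco _ k hk, coeff_add, hPco a k hk, hPco b k hk, hadd, map_add] }
    with hτ
  have hXm : (X : L[X]) ^ (m+1) ∈ J := Ideal.subset_span rfl
  have hmkXm : (mk X) ^ (m+1) = 0 := by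
    rw [← map_pow]
    exact Ideal.Quotient.eq_zero_iff_mem.mpr hXm
  -- e : evaluation at 0
  set e : (L[X] ⧸ J) →+* L := Ideal.Quotient.lift J (evalRingHom 0) (by
    intro p hp
    rw [hJ, Ideal.mem_span_singleton] at hp
    obtain ⟨q, rfl⟩ := hp
    simp) with he
  have he_mk : ∀ p : L[X], e (mk p) = p.eval 0 := fun p => rfl
  have hesurj : Function.Surjective e := fun a => ⟨mk (C a), by simp [he_mk]⟩
  have hker : RingHom.ker e = Ideal.span {mk X} := by
    ext q
    constructor
    · intro hq
      obtain ⟨p, rfl⟩ := Ideal.Quotient.mk_surjective q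
      rw [RingHom.mem_ker] at hq
      have hdvd : (X : L[X]) ∣ p := X_dvd_iff.mpr (by
        rw [coeff_zero_eq_eval_zero]
        exact hq)
      obtain ⟨r, rfl⟩ := hdvd
      rw [map_mul, Ideal.mem_span_singleton]
      exact ⟨mk r, rfl⟩
    · intro hq
      rw [Ideal.mem_span_singleton] at hq
      obtain ⟨r, rfl⟩ := hq
      rw [RingHom.mem_ker, map_mul]
      have : e (mk X) = 0 := by simp [he_mk]
      rw [this, zero_mul]
  have hnil : IsNilpotent (RingHom.ker e) := by
    refine ⟨m+1, ?_⟩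
    rw [hker, Ideal.span_singleton_pow, hmkXm]
    rw [Ideal.zero_eq_bot, Ideal.span_singleton_eq_bot]
  have hcomp : ∀ c, e (τ c) = algebraMap K L c := by
    intro c
    show e (mk (P c)) = _
    rw [he_mk, ← coeff_zero_eq_eval_zero, hPco c 0 (Nat.zero_le m), hD0']
  -- move to a subfield of L to fix universes
  set K0 : Subfield L := (algebraMap K L).fieldRange with hK0
  set f0 : K →+* K0 := (algebraMap K L).rangeRestrictField with hf0
  have hf0bij : Function.Bijective f0 :=
    ⟨fun a b hab => (algebraMap K L).injective (congrArg Subtype.val hab),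
     by rintro ⟨y, x, rfl⟩; exact ⟨x, rfl⟩⟩
  set eqv : K ≃+* K0 := RingEquiv.ofBijective f0 hf0bij with heqv
  have hcoe : ∀ c : K, ((eqv c : K0) : L) = algebraMap K L c := fun c => rfl
  have halg0 : ∀ c : K0, algebraMap K0 L c = (c : L) := fun c => rfl
  set τ0 : K0 →+* (L[X] ⧸ J) := τ.comp (eqv.symm : K0 ≃+* K).toRingHom with hτ0
  have hcomp0 : ∀ c : K0, e (τ0 c) = algebraMap K0 L c := by
    intro c
    show e (τ (eqv.symm c)) = _
    rw [hcomp, halg0, ← hcoe (eqv.symm c), eqv.apply_symm_apply]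
  obtain ⟨φ, hφ10, hφ2⟩ := aux_lift τ0 e hesurj hnil hcomp0
  have hφ1 : ∀ c : K, φ (algebraMap K L c) = τ c := by
    intro c
    have h1 := hφ10 (eqv c)
    rw [halg0, hcoe] at h1
    rw [h1, hτ0]
    show τ (eqv.symm (eqv c)) = τ c
    rw [eqv.symm_apply_apply]
  -- ψ0 : the induced endomorphism
  set ψ0 : (L[X] ⧸ J) →+* (L[X] ⧸ J) := Ideal.Quotient.lift J (eval₂RingHom φ (mk X)) (by
    intro p hp
    rw [hJ, Ideal.mem_span_singleton] at hp
    obtain ⟨q, rfl⟩ := hp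
    rw [coe_eval₂RingHom, eval₂_mul, eval₂_pow, eval₂_X, hmkXm, zero_mul]) with hψ0
  have hψ0_mk : ∀ p : L[X], ψ0 (mk p) = eval₂ φ (mk X) p := fun p => rfl
  have hψ0X : ψ0 (mk X) = mk X := by rw [hψ0_mk, eval₂_X]
  -- the difference raises the filtration
  set I : Ideal (L[X] ⧸ J) := Ideal.span {mk X} with hI
  have hN : ∀ q : L[X] ⧸ J, ψ0 q - q ∈ I := by
    intro q
    obtain ⟨p, rfl⟩ := Ideal.Quotient.mk_surjective q
    rw [hψ0_mk]
    induction p using Polynomial.induction_on' with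
    | add p q hp hq =>
      rw [eval₂_add, map_add]
      have : eval₂ φ (mk X) p + eval₂ φ (mk X) q - (mk p + mk q)
          = (eval₂ φ (mk X) p - mk p) + (eval₂ φ (mk X) q - mk q) := by ring
      rw [this]
      exact Ideal.add_mem _ hp hq
    | monomial n a =>
      rw [eval₂_monomial, ← C_mul_X_pow_eq_monomial, map_mul, map_pow]
      have : φ a * (mk X)^n - mk (C a) * (mk X)^n = (φ a - mk (C a)) * (mk X)^n := by ring
      rw [this, hI, Ideal.mem_span_singleton]
      have hmem : φ a - mk (C a) ∈ Ideal.span {mk X} := by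
        rw [← hI, ← hker, RingHom.mem_ker, map_sub, hφ2 a, he_mk, eval_C, sub_self]
      obtain ⟨j, hj⟩ := Ideal.mem_span_singleton.mp hmem
      exact ⟨j * (mk X)^n, by rw [hj]; ring⟩
  have hNpow : ∀ (k : ℕ) (q : L[X] ⧸ J), q ∈ I ^ k → ψ0 q - q ∈ I ^ (k+1) := by
    intro k q hq
    rw [hI, Ideal.span_singleton_pow, Ideal.mem_span_singleton] at hq
    obtain ⟨r, rfl⟩ := hq
    have heq : ψ0 ((mk X)^k * r) - (mk X)^k * r = (mk X)^k * (ψ0 r - r) := by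
      rw [map_mul, map_pow, hψ0X]; ring
    rw [heq, hI, Ideal.span_singleton_pow, Ideal.mem_span_singleton]
    obtain ⟨j, hj⟩ := Ideal.mem_span_singleton.mp (hN r)
    exact ⟨j, by rw [hj]; ring⟩
  have htop : I ^ (m+1) = ⊥ := by
    rw [hI, Ideal.span_singleton_pow, hmkXm, Ideal.span_singleton_eq_bot]
  have hinj : Function.Injective ψ0 := by
    rw [injective_iff_map_eq_zero]
    intro q hq
    have hmem : ∀ k, q ∈ I ^ k := by
      intro k
      induction k with
      | zero => rw [pow_zero, Ideal.one_eq_top]; exact Submodule.mem_top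
      | succ k ih =>
        have h := hNpow k q ih
        rw [hq, zero_sub] at h
        exact (neg_mem_iff).mp h
    have := hmem (m+1)
    rw [htop] at this
    simpa using this
  have hsurj : Function.Surjective ψ0 := by
    have key : ∀ (k : ℕ) (y : L[X] ⧸ J), ∃ q, y - ψ0 q ∈ I ^ k := by
      intro k
      induction k with
      | zero =>
        intro y
        exact ⟨0, by simp⟩
      | succ k ih =>
        intro y
        obtain ⟨q, hq⟩ := ih y
        refine ⟨q + (y - ψ0 q), ?_⟩
        rw [map_add]
        have : y - (ψ0 q + ψ0 (y - ψ0 q)) = -(ψ0 (y - ψ0 q) - (y - ψ0 q)) := by ring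
        rw [this]
        exact neg_mem (hNpow k _ hq)
    intro y
    obtain ⟨q, hq⟩ := key (m+1) y
    rw [htop, Ideal.mem_bot, sub_eq_zero] at hq
    exact ⟨q, hq.symm⟩
  refine ⟨RingEquiv.ofBijective ψ0 ⟨hinj, hsurj⟩, ?_⟩
  intro c
  show ψ0 (mk (C (algebraMap K L c))) = _
  rw [hψ0_mk, eval₂_C, hφ1]
  show mk (P c) = _
  rw [hP]
  simp only [map_sum]
end

section
/- Let (K, D) be a field of characteristic p > 0 equipped with an iterative higher derivation, and let L be a purely inseparable algebraic field extension of K such that there exist a ∈ L and b ∈ K with a^p = b and D_1(b) ≠ 0. Then for every m ≥ 1, the K-algebras L_m = L[t]/(t^{m+1}) and L̃_m are not isomorphic as K-algebras. -/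
open Polynomial Finset

/-- let `(K, D)` be a field of characteristic `p > 0` with an iterative
higher derivation, and `L` a purely inseparable algebraic extension of `K` containing
`a` with `a^p = b ∈ K` and `D_1(b) ≠ 0`.  Then for `m ≥ 1` the `K`-algebras
`L_m = L[t]/(t^{m+1})` (standard structure) and `L̃_m` (twisted structure
`c ↦ ∑_{i≤m} D_i(c) t^i`) are not isomorphic as `K`-algebras. -/
theorem stmt_7 {K L : Type*} [Field K] [Field L] [Algebra K L]
    (p : ℕ) (hp : p.Prime) [CharP K p] [IsPurelyInseparable K L]
    [Algebra.IsAlgebraic K L]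
    (D : ℕ → K → K)
    (hD0 : D 0 = id)
    (hadd : ∀ i (a b : K), D i (a + b) = D i a + D i b)
    (hleib : ∀ k (a b : K), D k (a * b) = ∑ i ∈ Finset.range (k + 1), D i a * D (k - i) b)
    (hiter : ∀ i j (a : K), D i (D j a) = (i + j).choose j • D (i + j) a)
    (a : L) (b : K) (hab : a ^ p = algebraMap K L b) (hb : D 1 b ≠ 0)
    (m : ℕ) (hm : 1 ≤ m) :
    ¬ ∃ ψ : (L[X] ⧸ Ideal.span {(X : L[X]) ^ (m + 1)})
        ≃+* (L[X] ⧸ Ideal.span {(X : L[X]) ^ (m + 1)}),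
      ∀ c : K,
        ψ (Ideal.Quotient.mk (Ideal.span {(X : L[X]) ^ (m + 1)}) (C (algebraMap K L c)))
          = ∑ i ∈ Finset.range (m + 1),
              Ideal.Quotient.mk (Ideal.span {(X : L[X]) ^ (m + 1)})
                (C (algebraMap K L (D i c)) * X ^ i) := by
  rintro ⟨ψ, hψ⟩
  haveI : CharP L p := charP_of_injective_algebraMap (algebraMap K L).injective p
  haveI : ExpChar L p := ExpChar.prime hp
  obtain ⟨f, hf⟩ := Ideal.Quotient.mk_surjective
    (ψ (Ideal.Quotient.mk (Ideal.span {(X : L[X]) ^ (m + 1)}) (C a)))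
  set g : L[X] := ∑ i ∈ Finset.range (m + 1), C (algebraMap K L (D i b)) * X ^ i with hg
  have key : Ideal.Quotient.mk (Ideal.span {(X : L[X]) ^ (m + 1)}) (f ^ p - g) = 0 := by
    rw [map_sub, map_pow, hf, ← map_pow ψ, ← map_pow, ← C_pow, hab, hψ b, hg, map_sum,
      sub_self]
  have hdvd : (X : L[X]) ^ (m + 1) ∣ f ^ p - g := by
    rwa [← Ideal.mem_span_singleton, ← Ideal.Quotient.eq_zero_iff_mem]
  obtain ⟨h, hh⟩ := hdvd
  have hc : (f ^ p - g).coeff 1 = 0 := by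
    rw [hh, mul_comm, coeff_mul_X_pow', if_neg (by omega)]
  have hgc : g.coeff 1 = algebraMap K L (D 1 b) := by
    rw [hg, finset_sum_coeff]
    simp only [coeff_C_mul, coeff_X_pow]
    rw [Finset.sum_eq_single 1]
    · simp
    · intro i hi hne; simp [hne.symm]
    · intro habs; exact absurd (Finset.mem_range.2 (by omega)) habs
  have hfc : (f ^ p).coeff 1 = 0 := by
    rw [← map_frobenius_expand p f, coeff_map, coeff_expand hp.pos,
      if_neg (by simpa using hp.one_lt.ne')]
    simp
  rw [coeff_sub, hfc, hgc, zero_sub, neg_eq_zero] at hc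
  exact hb ((_root_.map_eq_zero _).1 hc)
end

section
/- Let (K, D) be a field of characteristic p > 0 equipped with an iterative higher derivation, and let L be a purely inseparable algebraic field extension of K such that there exist a ∈ L and b ∈ K with a^p = b and D_1(b) ≠ 0. Then for every m ≥ 1, there is no K-algebra homomorphism from L to L̃_m. -/
open Polynomial Finset

/-- with `(K, D)` of characteristic `p > 0`, `L/K` purely inseparable
algebraic, `a ∈ L`, `b ∈ K` with `a^p = b` and `D_1(b) ≠ 0`, for every `m ≥ 1` there is
no `K`-algebra homomorphism from `L` to `L̃_m` (the truncated polynomial ring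
`L[t]/(t^{m+1})` with the twisted structure map `c ↦ ∑_{i≤m} D_i(c) t^i`). -/
theorem stmt_8 {K L : Type*} [Field K] [Field L] [Algebra K L]
    (p : ℕ) (hp : p.Prime) [CharP K p] [IsPurelyInseparable K L]
    [Algebra.IsAlgebraic K L]
    (D : ℕ → K → K)
    (hD0 : D 0 = id)
    (hadd : ∀ i (a b : K), D i (a + b) = D i a + D i b)
    (hleib : ∀ k (a b : K), D k (a * b) = ∑ i ∈ Finset.range (k + 1), D i a * D (k - i) b)
    (hiter : ∀ i j (a : K), D i (D j a) = (i + j).choose j • D (i + j) a)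
    (a : L) (b : K) (hab : a ^ p = algebraMap K L b) (hb : D 1 b ≠ 0)
    (m : ℕ) (hm : 1 ≤ m) :
    ¬ ∃ φ : L →+* (L[X] ⧸ Ideal.span {(X : L[X]) ^ (m + 1)}),
      ∀ c : K,
        φ (algebraMap K L c)
          = ∑ i ∈ Finset.range (m + 1),
              Ideal.Quotient.mk (Ideal.span {(X : L[X]) ^ (m + 1)})
                (C (algebraMap K L (D i c)) * X ^ i) := by
  rintro ⟨φ, hφ⟩
  haveI : CharP L p := charP_of_injective_algebraMap (algebraMap K L).injective p
  haveI : Fact p.Prime := ⟨hp⟩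
  obtain ⟨q, hq⟩ := Ideal.Quotient.mk_surjective (φ a)
  set I := Ideal.span {(X : L[X]) ^ (m + 1)}
  have h1 : Ideal.Quotient.mk I (q ^ p) =
      Ideal.Quotient.mk I (∑ i ∈ Finset.range (m + 1),
        C (algebraMap K L (D i b)) * X ^ i) := by
    rw [map_pow, hq, ← map_pow, hab, hφ b, map_sum]
  rw [Ideal.Quotient.eq, Ideal.mem_span_singleton] at h1
  obtain ⟨r, hr⟩ := h1
  have hc := congrArg (fun f => f.coeff 1) hr
  simp only [coeff_sub, finset_sum_coeff, coeff_C_mul, coeff_X_pow] at hc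
  -- coefficient 1 of q^p is 0
  have hqp : (q ^ p).coeff 1 = 0 := by
    rw [← map_frobenius_expand p q, coeff_map, coeff_expand hp.pos]
    rw [if_neg (by simpa using hp.one_lt.ne')]
    exact map_zero _
  have hsum : (∑ i ∈ Finset.range (m + 1),
      algebraMap K L (D i b) * if 1 = i then (1 : L) else 0) = algebraMap K L (D 1 b) := by
    rw [Finset.sum_eq_single 1]
    · simp
    · intro i _ hi; simp [Ne.symm hi]
    · intro h; exact absurd (Finset.mem_range.mpr (by omega)) h
  have hmul : ((X : L[X]) ^ (m + 1) * r).coeff 1 = 0 := by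
    rw [mul_comm, coeff_mul_X_pow']
    rw [if_neg (by omega)]
  rw [hqp, hsum, hmul] at hc
  have : algebraMap K L (D 1 b) = 0 := by linear_combination -hc
  exact hb ((algebraMap K L).injective (by simpa using this))
end

section
/- Let K be a field with an iterative higher derivation D, let m, n ∈ ℕ, and let B be a K-algebra. Write K_m = K[t]/(t^{m+1}) and K_n = K[u]/(u^{n+1}). Regard B ⊗_K K_n as a K-algebra via the twisted structure map c ↦ Σ_{j≤n} D_j(c)·(1 ⊗ u^j), and form the tensor product (B ⊗_K K_n)~ ⊗_K K_m over K using this structure. Regard (B ⊗_K K_m) ⊗_K K_n (with the ordinary tensor product K-algebra structures) as a K-algebra via the twisted structure map c ↦ Σ_{j≤n} D_j(c)·(1 ⊗ 1 ⊗ u^j). Then the map θ determined by θ(b ⊗ u^j ⊗ t^i) = b ⊗ t^i ⊗ u^j is an isomorphism of K-algebras ((B ⊗_K K_n)~ ⊗_K K_m) ≅ ((B ⊗_K K_m) ⊗_K K_n)~. -/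
open Polynomial Finset
open scoped TensorProduct

/-- The truncated polynomial ring `K_m = K[t]/(t^{m+1})`. -/
noncomputable def TruncP (K : Type*) [CommRing K] (m : ℕ) : Type _ :=
  K[X] ⧸ Ideal.span {(X : K[X]) ^ (m + 1)}

noncomputable instance (K : Type*) [CommRing K] (m : ℕ) : CommRing (TruncP K m) :=
  Ideal.Quotient.commRing _

noncomputable instance (K : Type*) [CommRing K] (m : ℕ) : Algebra K (TruncP K m) :=
  Ideal.Quotient.algebra K

/-- The class of `t^i` in `K_m = K[t]/(t^{m+1})`. -/
noncomputable def tpow (K : Type*) [CommRing K] (m i : ℕ) : TruncP K m :=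
  Ideal.Quotient.mk _ (X ^ i)

/-- Type synonym: the ring `C` regarded as a `K`-algebra via the ring homomorphism `e`
(the "twisted" `K`-algebra structure). -/
def TwistedT (K : Type*) [CommRing K] {C : Type*} [CommRing C] (e : K →+* C) : Type _ := C

noncomputable instance (K : Type*) [CommRing K] {C : Type*} [CommRing C] (e : K →+* C) :
    CommRing (TwistedT K e) := ‹CommRing C›

noncomputable instance (K : Type*) [CommRing K] {C : Type*} [CommRing C] (e : K →+* C) :
    Algebra K (TwistedT K e) := e.toAlgebra

/-- The identity map of `C`, viewed as a map into the twist `TwistedT K e`. -/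
def twmk {K C : Type*} [CommRing K] [CommRing C] (e : K →+* C) (x : C) : TwistedT K e := x


section AuxTrunc

lemma tmm {K A C : Type*} [CommRing K] [CommRing A] [Algebra K A] [CommRing C] [Algebra K C]
    (a₁ a₂ : A) (b₁ b₂ : C) :
    (a₁ ⊗ₜ[K] b₁) * (a₂ ⊗ₜ[K] b₂) = (a₁ * a₂) ⊗ₜ[K] (b₁ * b₂) :=
  Algebra.TensorProduct.tmul_mul_tmul _ _ _ _

lemma twmk_eq {K C : Type*} [CommRing K] [CommRing C] (e : K →+* C) (x : C) :
    twmk e x = x := rfl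

lemma tpow_zero' (K : Type*) [CommRing K] (m : ℕ) : tpow K m 0 = 1 := by
  simp [tpow]
  rfl

lemma tpow_one_pow (K : Type*) [CommRing K] (m i : ℕ) :
    tpow K m 1 ^ i = tpow K m i := by
  unfold tpow
  rw [pow_one]; exact ((Ideal.Quotient.mk (Ideal.span {(X : K[X]) ^ (m + 1)})).map_pow X i)

lemma tpow_top (K : Type*) [CommRing K] (m : ℕ) : tpow K m (m + 1) = 0 := by
  unfold tpow
  refine Ideal.Quotient.eq_zero_iff_mem.2 ?_
  exact Ideal.subset_span rfl

lemma mk_C (K : Type*) [CommRing K] (m : ℕ) (c : K) :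
    (Ideal.Quotient.mk (Ideal.span {(X : K[X]) ^ (m + 1)}) (Polynomial.C c) : TruncP K m)
      = algebraMap K (TruncP K m) c := rfl

noncomputable def gmap {K : Type*} [CommRing K] {T : Type*} [CommRing T] (m : ℕ)
    (e : K →+* T) (x : T) (hx : x ^ (m + 1) = 0) : TruncP K m →+* T :=
  Ideal.Quotient.lift _ (eval₂RingHom e x) (by
    intro a ha
    rw [Ideal.mem_span_singleton] at ha
    obtain ⟨q, rfl⟩ := ha
    rw [coe_eval₂RingHom, eval₂_mul, eval₂_X_pow, hx, zero_mul])

lemma gmap_tpow {K : Type*} [CommRing K] {T : Type*} [CommRing T] (m : ℕ)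
    (e : K →+* T) (x : T) (hx : x ^ (m + 1) = 0) (i : ℕ) :
    gmap m e x hx (tpow K m i) = x ^ i := by
  have h : gmap m e x hx (tpow K m i) = eval₂RingHom e x (X ^ i) :=
    Ideal.Quotient.lift_mk _ _ _
  rw [h, coe_eval₂RingHom, eval₂_X_pow]

lemma gmap_algebraMap {K : Type*} [CommRing K] {T : Type*} [CommRing T] (m : ℕ)
    (e : K →+* T) (x : T) (hx : x ^ (m + 1) = 0) (c : K) :
    gmap m e x hx (algebraMap K (TruncP K m) c) = e c := by
  have h : gmap m e x hx (algebraMap K (TruncP K m) c) = eval₂RingHom e x (Polynomial.C c) :=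
    Ideal.Quotient.lift_mk _ _ _
  rw [h, coe_eval₂RingHom, eval₂_C]

lemma mk_dec {K : Type*} [CommRing K] {m : ℕ} (p : K[X]) :
    (Ideal.Quotient.mk (Ideal.span {(X : K[X]) ^ (m + 1)}) p : TruncP K m)
      = ∑ k ∈ p.support, p.coeff k • tpow K m k := by
  conv_lhs => rw [p.as_sum_support]
  rw [map_sum]
  refine Finset.sum_congr rfl fun k _ => ?_
  rw [← Polynomial.C_mul_X_pow_eq_monomial, map_mul, mk_C]
  exact (Algebra.smul_def _ _).symm

lemma tpow_succ' (K : Type*) [CommRing K] (m k : ℕ) :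
    tpow K m (k + 1) = tpow K m k * tpow K m 1 := by
  rw [← tpow_one_pow, ← tpow_one_pow K m k, pow_succ]

lemma ext_aux {K : Type*} [CommRing K] {A : Type*} [CommRing A] [Algebra K A]
    {T : Type*} [CommRing T] {m : ℕ} (h1 h2 : (A ⊗[K] TruncP K m) →+* T)
    (hA : ∀ a : A, h1 (a ⊗ₜ[K] 1) = h2 (a ⊗ₜ[K] 1))
    (ht : h1 ((1 : A) ⊗ₜ[K] tpow K m 1) = h2 ((1 : A) ⊗ₜ[K] tpow K m 1)) : h1 = h2 := by
  have key : ∀ (a : A) (k : ℕ), h1 (a ⊗ₜ[K] tpow K m k) = h2 (a ⊗ₜ[K] tpow K m k) := by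
    intro a k
    induction k generalizing a with
    | zero => rw [tpow_zero']; exact hA a
    | succ k ih =>
      have h : a ⊗ₜ[K] tpow K m (k + 1)
          = (a ⊗ₜ[K] tpow K m k) * ((1 : A) ⊗ₜ[K] tpow K m 1) := by
        have := tmm (K := K) a (1 : A) (tpow K m k) (tpow K m 1)
        rw [mul_one, ← tpow_succ'] at this
        exact this.symm
      rw [h, map_mul, map_mul, ih, ht]
  refine RingHom.ext fun x => ?_
  induction x using TensorProduct.induction_on with
  | zero => simp
  | add x y hx hy => rw [map_add, map_add, hx, hy]
  | tmul a w =>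
    obtain ⟨p, rfl⟩ := Ideal.Quotient.mk_surjective w
    rw [mk_dec, TensorProduct.tmul_sum, map_sum, map_sum]
    refine Finset.sum_congr rfl fun k _ => ?_
    rw [TensorProduct.tmul_smul, TensorProduct.smul_tmul']
    exact key _ _

end AuxTrunc

section Main

variable {K B : Type*} [Field K] [CommRing B] [Algebra K B] {D : ℕ → K → K} {m n : ℕ}
  {e1 : K →+* (B ⊗[K] TruncP K n)}
  {e2 : K →+* ((B ⊗[K] TruncP K m) ⊗[K] TruncP K n)}

/-- `f : (B ⊗ K_n)~ → ((B ⊗ K_m) ⊗ K_n)~`, `b ⊗ u^j ↦ (b ⊗ 1) ⊗ u^j`. -/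
noncomputable def fAH
    (he1 : ∀ c : K, e1 c = ∑ j ∈ Finset.range (n + 1),
      algebraMap K B (D j c) ⊗ₜ[K] tpow K n j)
    (he2 : ∀ c : K, e2 c = ∑ j ∈ Finset.range (n + 1),
      (algebraMap K B (D j c) ⊗ₜ[K] (1 : TruncP K m)) ⊗ₜ[K] tpow K n j) :
    TwistedT K e1 →ₐ[K] TwistedT K e2 where
  toRingHom := ((Algebra.TensorProduct.map
      (Algebra.TensorProduct.includeLeft : B →ₐ[K] B ⊗[K] TruncP K m)
      (AlgHom.id K (TruncP K n))).toRingHom)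
  commutes' := fun c => by
    show (Algebra.TensorProduct.map
      (Algebra.TensorProduct.includeLeft : B →ₐ[K] B ⊗[K] TruncP K m)
      (AlgHom.id K (TruncP K n))) (e1 c) = e2 c
    rw [he1 c, he2 c, map_sum]
    exact Finset.sum_congr rfl fun j _ => by
      rw [Algebra.TensorProduct.map_tmul]
      rfl

lemma fAH_tmul (he1 : ∀ c : K, e1 c = ∑ j ∈ Finset.range (n + 1),
      algebraMap K B (D j c) ⊗ₜ[K] tpow K n j)
    (he2 : ∀ c : K, e2 c = ∑ j ∈ Finset.range (n + 1),
      (algebraMap K B (D j c) ⊗ₜ[K] (1 : TruncP K m)) ⊗ₜ[K] tpow K n j)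
    (b : B) (y : TruncP K n) :
    fAH he1 he2 (twmk e1 (b ⊗ₜ[K] y)) = (b ⊗ₜ[K] (1 : TruncP K m)) ⊗ₜ[K] y := by
  show (Algebra.TensorProduct.map
      (Algebra.TensorProduct.includeLeft : B →ₐ[K] B ⊗[K] TruncP K m)
      (AlgHom.id K (TruncP K n))) (b ⊗ₜ[K] y) = _
  rw [Algebra.TensorProduct.map_tmul]
  rfl

/-- nilpotency of `(1 ⊗ t) ⊗ 1` in `(B ⊗ K_m) ⊗ K_n`. -/
lemma gx_nil : (((1 : B) ⊗ₜ[K] tpow K m 1) ⊗ₜ[K] (1 : TruncP K n) :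
    (B ⊗[K] TruncP K m) ⊗[K] TruncP K n) ^ (m + 1) = 0 := by
  rw [Algebra.TensorProduct.tmul_pow, Algebra.TensorProduct.tmul_pow, one_pow, one_pow,
    tpow_one_pow, tpow_top]
  rw [TensorProduct.tmul_zero, TensorProduct.zero_tmul]

/-- `g : K_m → ((B ⊗ K_m) ⊗ K_n)~`, `t^i ↦ (1 ⊗ t^i) ⊗ 1`. -/
noncomputable def gAH (e2 : K →+* ((B ⊗[K] TruncP K m) ⊗[K] TruncP K n)) :
    TruncP K m →ₐ[K] TwistedT K e2 where
  toRingHom := gmap m e2 (((1 : B) ⊗ₜ[K] tpow K m 1) ⊗ₜ[K] (1 : TruncP K n)) gx_nil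
  commutes' := fun c => gmap_algebraMap m e2 _ _ c

lemma gAH_tpow (e2 : K →+* ((B ⊗[K] TruncP K m) ⊗[K] TruncP K n)) (i : ℕ) :
    gAH e2 (tpow K m i) = ((1 : B) ⊗ₜ[K] tpow K m i) ⊗ₜ[K] (1 : TruncP K n) := by
  rw [show ⇑(gAH e2) = ⇑(gmap m e2 (((1 : B) ⊗ₜ[K] tpow K m 1) ⊗ₜ[K] (1 : TruncP K n)) gx_nil)
    from rfl]
  rw [gmap_tpow, Algebra.TensorProduct.tmul_pow, Algebra.TensorProduct.tmul_pow,
    one_pow, one_pow, tpow_one_pow]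

noncomputable def thetaAH
    (he1 : ∀ c : K, e1 c = ∑ j ∈ Finset.range (n + 1),
      algebraMap K B (D j c) ⊗ₜ[K] tpow K n j)
    (he2 : ∀ c : K, e2 c = ∑ j ∈ Finset.range (n + 1),
      (algebraMap K B (D j c) ⊗ₜ[K] (1 : TruncP K m)) ⊗ₜ[K] tpow K n j) :
    ((TwistedT K e1) ⊗[K] TruncP K m) →ₐ[K] TwistedT K e2 :=
  Algebra.TensorProduct.lift (fAH he1 he2) (gAH e2) fun _ _ => Commute.all _ _

lemma theta_gen
    (he1 : ∀ c : K, e1 c = ∑ j ∈ Finset.range (n + 1),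
      algebraMap K B (D j c) ⊗ₜ[K] tpow K n j)
    (he2 : ∀ c : K, e2 c = ∑ j ∈ Finset.range (n + 1),
      (algebraMap K B (D j c) ⊗ₜ[K] (1 : TruncP K m)) ⊗ₜ[K] tpow K n j)
    (b : B) (i j : ℕ) :
    thetaAH he1 he2 ((twmk e1 (b ⊗ₜ[K] tpow K n j)) ⊗ₜ[K] tpow K m i)
      = (b ⊗ₜ[K] tpow K m i) ⊗ₜ[K] tpow K n j := by
  unfold thetaAH
  rw [Algebra.TensorProduct.lift_tmul, fAH_tmul, gAH_tpow]
  show ((b ⊗ₜ[K] (1 : TruncP K m)) ⊗ₜ[K] tpow K n j :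
      (B ⊗[K] TruncP K m) ⊗[K] TruncP K n) * (((1 : B) ⊗ₜ[K] tpow K m i) ⊗ₜ[K] (1 : TruncP K n))
    = (b ⊗ₜ[K] tpow K m i) ⊗ₜ[K] tpow K n j
  have h1 := tmm (K := K) b (1 : B) (1 : TruncP K m) (tpow K m i)
  rw [mul_one, one_mul] at h1
  have := tmm (K := K) (b ⊗ₜ[K] (1 : TruncP K m))
    ((1 : B) ⊗ₜ[K] tpow K m i) (tpow K n j) (1 : TruncP K n)
  rw [mul_one] at this
  erw [h1] at this
  exact this

/-- the structure map `K → (B ⊗ K_n)~ ⊗ K_m`, `c ↦ (c•1 ⊗ 1) ⊗ 1`. -/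
noncomputable def fR (m : ℕ) (e1 : K →+* (B ⊗[K] TruncP K n)) :
    K →+* ((TwistedT K e1) ⊗[K] TruncP K m) :=
  ((Algebra.TensorProduct.includeLeftRingHom :
      TwistedT K e1 →+* (TwistedT K e1) ⊗[K] TruncP K m).comp
    ((Algebra.TensorProduct.includeLeftRingHom : B →+* B ⊗[K] TruncP K n) :
      B →+* TwistedT K e1)).comp (algebraMap K B)

noncomputable def F1 (m : ℕ) (e1 : K →+* (B ⊗[K] TruncP K n)) :
    B →ₐ[K] TwistedT K (fR m e1) where
  toRingHom := ((Algebra.TensorProduct.includeLeftRingHom :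
      TwistedT K e1 →+* (TwistedT K e1) ⊗[K] TruncP K m).comp
    ((Algebra.TensorProduct.includeLeftRingHom : B →+* B ⊗[K] TruncP K n) :
      B →+* TwistedT K e1))
  commutes' := fun _ => rfl

lemma F1_apply (m : ℕ) (e1 : K →+* (B ⊗[K] TruncP K n)) (b : B) :
    F1 m e1 b = (twmk e1 (b ⊗ₜ[K] (1 : TruncP K n))) ⊗ₜ[K] (1 : TruncP K m) := rfl

lemma F2x_nil (m : ℕ) (e1 : K →+* (B ⊗[K] TruncP K n)) :
    ((1 : TwistedT K e1) ⊗ₜ[K] tpow K m 1 : (TwistedT K e1) ⊗[K] TruncP K m) ^ (m + 1)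
      = 0 := by
  rw [Algebra.TensorProduct.tmul_pow, one_pow, tpow_one_pow, tpow_top,
    TensorProduct.tmul_zero]

noncomputable def F2 (m : ℕ) (e1 : K →+* (B ⊗[K] TruncP K n)) :
    TruncP K m →ₐ[K] TwistedT K (fR m e1) where
  toRingHom := gmap m (fR m e1) ((1 : TwistedT K e1) ⊗ₜ[K] tpow K m 1) (F2x_nil m e1)
  commutes' := fun c => gmap_algebraMap m (fR m e1) _ _ c

lemma F2_tpow (m : ℕ) (e1 : K →+* (B ⊗[K] TruncP K n)) (i : ℕ) :
    F2 m e1 (tpow K m i) = ((1 : TwistedT K e1) ⊗ₜ[K] tpow K m i) := by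
  rw [show ⇑(F2 m e1)
    = ⇑(gmap m (fR m e1) ((1 : TwistedT K e1) ⊗ₜ[K] tpow K m 1) (F2x_nil m e1)) from rfl]
  rw [gmap_tpow, Algebra.TensorProduct.tmul_pow, one_pow, tpow_one_pow]

lemma Gx_nil (m : ℕ) (e1 : K →+* (B ⊗[K] TruncP K n)) :
    ((twmk e1 ((1 : B) ⊗ₜ[K] tpow K n 1)) ⊗ₜ[K] (1 : TruncP K m) :
      (TwistedT K e1) ⊗[K] TruncP K m) ^ (n + 1) = 0 := by
  rw [Algebra.TensorProduct.tmul_pow, one_pow]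
  have hz : (twmk e1 ((1 : B) ⊗ₜ[K] tpow K n 1)) ^ (n + 1) = (0 : TwistedT K e1) := by
    show (((1 : B) ⊗ₜ[K] tpow K n 1 : B ⊗[K] TruncP K n)) ^ (n + 1) = 0
    rw [Algebra.TensorProduct.tmul_pow, one_pow, tpow_one_pow, tpow_top,
      TensorProduct.tmul_zero]
  rw [hz, TensorProduct.zero_tmul]

noncomputable def GG (m : ℕ) (e1 : K →+* (B ⊗[K] TruncP K n)) :
    TruncP K n →ₐ[K] TwistedT K (fR m e1) where
  toRingHom := gmap n (fR m e1)
    ((twmk e1 ((1 : B) ⊗ₜ[K] tpow K n 1)) ⊗ₜ[K] (1 : TruncP K m)) (Gx_nil m e1)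
  commutes' := fun c => gmap_algebraMap n (fR m e1) _ _ c

lemma GG_tpow (m : ℕ) (e1 : K →+* (B ⊗[K] TruncP K n)) (j : ℕ) :
    GG m e1 (tpow K n j)
      = ((twmk e1 ((1 : B) ⊗ₜ[K] tpow K n j)) ⊗ₜ[K] (1 : TruncP K m)) := by
  rw [show ⇑(GG m e1) = ⇑(gmap n (fR m e1)
    ((twmk e1 ((1 : B) ⊗ₜ[K] tpow K n 1)) ⊗ₜ[K] (1 : TruncP K m)) (Gx_nil m e1))
    from rfl]
  rw [gmap_tpow, Algebra.TensorProduct.tmul_pow]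
  have hz : (twmk e1 ((1 : B) ⊗ₜ[K] tpow K n 1)) ^ j
      = twmk e1 ((1 : B) ⊗ₜ[K] tpow K n j) := by
    show (((1 : B) ⊗ₜ[K] tpow K n 1 : B ⊗[K] TruncP K n)) ^ j = (1 : B) ⊗ₜ[K] tpow K n j
    rw [Algebra.TensorProduct.tmul_pow, one_pow, tpow_one_pow]
  rw [hz, one_pow]

noncomputable def FAH (m : ℕ) (e1 : K →+* (B ⊗[K] TruncP K n)) :
    (B ⊗[K] TruncP K m) →ₐ[K] TwistedT K (fR m e1) :=
  Algebra.TensorProduct.lift (F1 m e1) (F2 m e1) fun _ _ => Commute.all _ _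

noncomputable def psiAH (m : ℕ) (e1 : K →+* (B ⊗[K] TruncP K n)) :
    ((B ⊗[K] TruncP K m) ⊗[K] TruncP K n) →ₐ[K] TwistedT K (fR m e1) :=
  Algebra.TensorProduct.lift (FAH m e1) (GG m e1) fun _ _ => Commute.all _ _

lemma psi_gen (m : ℕ) (e1 : K →+* (B ⊗[K] TruncP K n)) (b : B) (i j : ℕ) :
    psiAH m e1 ((b ⊗ₜ[K] tpow K m i) ⊗ₜ[K] tpow K n j)
      = ((twmk e1 (b ⊗ₜ[K] tpow K n j)) ⊗ₜ[K] tpow K m i) := by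
  unfold psiAH FAH
  erw [Algebra.TensorProduct.lift_tmul, Algebra.TensorProduct.lift_tmul,
    F1_apply, F2_tpow, GG_tpow]
  have h1 : (((twmk e1 (b ⊗ₜ[K] (1 : TruncP K n))) ⊗ₜ[K] (1 : TruncP K m)) *
        ((1 : TwistedT K e1) ⊗ₜ[K] tpow K m i) :
        (TwistedT K e1) ⊗[K] TruncP K m)
      = ((twmk e1 (b ⊗ₜ[K] (1 : TruncP K n))) ⊗ₜ[K] tpow K m i) := by
    have := tmm (K := K) (twmk e1 (b ⊗ₜ[K] (1 : TruncP K n)))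
      (1 : TwistedT K e1) (1 : TruncP K m) (tpow K m i)
    rw [mul_one, one_mul] at this
    exact this
  erw [h1]
  have h2 : (((twmk e1 (b ⊗ₜ[K] (1 : TruncP K n))) ⊗ₜ[K] tpow K m i) *
        ((twmk e1 ((1 : B) ⊗ₜ[K] tpow K n j)) ⊗ₜ[K] (1 : TruncP K m)) :
        (TwistedT K e1) ⊗[K] TruncP K m)
      = ((twmk e1 (b ⊗ₜ[K] tpow K n j)) ⊗ₜ[K] tpow K m i) := by
    have := tmm (K := K) (twmk e1 (b ⊗ₜ[K] (1 : TruncP K n)))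
      (twmk e1 ((1 : B) ⊗ₜ[K] tpow K n j)) (tpow K m i) (1 : TruncP K m)
    rw [mul_one] at this
    have hbu : (twmk e1 (b ⊗ₜ[K] (1 : TruncP K n))) * (twmk e1 ((1 : B) ⊗ₜ[K] tpow K n j))
        = twmk e1 (b ⊗ₜ[K] tpow K n j) := by
      show ((b ⊗ₜ[K] (1 : TruncP K n) : B ⊗[K] TruncP K n) * ((1 : B) ⊗ₜ[K] tpow K n j))
        = b ⊗ₜ[K] tpow K n j
      have := tmm (K := K) b (1 : B) (1 : TruncP K n) (tpow K n j)
      rw [mul_one, one_mul] at this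
      exact this
    rw [hbu] at this
    exact this
  erw [h2]

variable (he1 : ∀ c : K, e1 c = ∑ j ∈ Finset.range (n + 1),
      algebraMap K B (D j c) ⊗ₜ[K] tpow K n j)
  (he2 : ∀ c : K, e2 c = ∑ j ∈ Finset.range (n + 1),
      (algebraMap K B (D j c) ⊗ₜ[K] (1 : TruncP K m)) ⊗ₜ[K] tpow K n j)

lemma psi_theta_gen (b : B) (i j : ℕ) :
    psiAH m e1 (thetaAH he1 he2 ((twmk e1 (b ⊗ₜ[K] tpow K n j)) ⊗ₜ[K] tpow K m i))
      = (twmk e1 (b ⊗ₜ[K] tpow K n j)) ⊗ₜ[K] tpow K m i := by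
  rw [theta_gen, psi_gen]

lemma theta_psi_gen (b : B) (i j : ℕ) :
    thetaAH he1 he2 (psiAH m e1 ((b ⊗ₜ[K] tpow K m i) ⊗ₜ[K] tpow K n j))
      = (b ⊗ₜ[K] tpow K m i) ⊗ₜ[K] tpow K n j := by
  rw [psi_gen, theta_gen]

lemma psi_theta (x : (TwistedT K e1) ⊗[K] TruncP K m) :
    psiAH m e1 (thetaAH he1 he2 x) = x := by
  have E2 : ((psiAH m e1).toRingHom.comp (thetaAH he1 he2).toRingHom).comp
      (Algebra.TensorProduct.includeLeftRingHom :
        TwistedT K e1 →+* (TwistedT K e1) ⊗[K] TruncP K m)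
      = (Algebra.TensorProduct.includeLeftRingHom :
        TwistedT K e1 →+* (TwistedT K e1) ⊗[K] TruncP K m) := by
    refine ext_aux _ _ (fun b => ?_) ?_
    · show psiAH m e1 (thetaAH he1 he2 ((twmk e1 (b ⊗ₜ[K] tpow K n 0)) ⊗ₜ[K] tpow K m 0))
        = (twmk e1 (b ⊗ₜ[K] tpow K n 0)) ⊗ₜ[K] tpow K m 0
      exact psi_theta_gen he1 he2 b 0 0
    · show psiAH m e1 (thetaAH he1 he2 ((twmk e1 ((1 : B) ⊗ₜ[K] tpow K n 1)) ⊗ₜ[K] tpow K m 0))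
        = (twmk e1 ((1 : B) ⊗ₜ[K] tpow K n 1)) ⊗ₜ[K] tpow K m 0
      exact psi_theta_gen he1 he2 1 0 1
  have E : (psiAH m e1).toRingHom.comp (thetaAH he1 he2).toRingHom
      = RingHom.id ((TwistedT K e1) ⊗[K] TruncP K m) := by
    refine ext_aux _ _ (fun a => ?_) ?_
    · exact RingHom.congr_fun E2 a
    · show psiAH m e1 (thetaAH he1 he2 ((twmk e1 ((1 : B) ⊗ₜ[K] tpow K n 0)) ⊗ₜ[K] tpow K m 1))
        = (twmk e1 ((1 : B) ⊗ₜ[K] tpow K n 0)) ⊗ₜ[K] tpow K m 1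
      exact psi_theta_gen he1 he2 1 1 0
  exact RingHom.congr_fun E x

lemma theta_psi (y : (B ⊗[K] TruncP K m) ⊗[K] TruncP K n) :
    thetaAH he1 he2 (psiAH m e1 y) = y := by
  have E2 : ((thetaAH he1 he2).toRingHom.comp (psiAH m e1).toRingHom).comp
      (Algebra.TensorProduct.includeLeftRingHom :
        (B ⊗[K] TruncP K m) →+* (B ⊗[K] TruncP K m) ⊗[K] TruncP K n)
      = (Algebra.TensorProduct.includeLeftRingHom :
        (B ⊗[K] TruncP K m) →+* (B ⊗[K] TruncP K m) ⊗[K] TruncP K n) := by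
    refine ext_aux _ _ (fun b => ?_) ?_
    · show thetaAH he1 he2 (psiAH m e1 ((b ⊗ₜ[K] tpow K m 0) ⊗ₜ[K] tpow K n 0))
        = (b ⊗ₜ[K] tpow K m 0) ⊗ₜ[K] tpow K n 0
      exact theta_psi_gen he1 he2 b 0 0
    · show thetaAH he1 he2 (psiAH m e1 (((1 : B) ⊗ₜ[K] tpow K m 1) ⊗ₜ[K] tpow K n 0))
        = ((1 : B) ⊗ₜ[K] tpow K m 1) ⊗ₜ[K] tpow K n 0
      exact theta_psi_gen he1 he2 1 1 0
  have E : (thetaAH he1 he2).toRingHom.comp (psiAH m e1).toRingHom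
      = RingHom.id ((B ⊗[K] TruncP K m) ⊗[K] TruncP K n) := by
    refine ext_aux _ _ (fun a => ?_) ?_
    · exact RingHom.congr_fun E2 a
    · show thetaAH he1 he2 (psiAH m e1 (((1 : B) ⊗ₜ[K] tpow K m 0) ⊗ₜ[K] tpow K n 1))
        = ((1 : B) ⊗ₜ[K] tpow K m 0) ⊗ₜ[K] tpow K n 1
      exact theta_psi_gen he1 he2 1 0 1
  exact RingHom.congr_fun E y

end Main

/-- for a field `K` with an iterative higher derivation `D`, a `K`-algebra
`B`, and `m, n ∈ ℕ`, the map `θ(b ⊗ u^j ⊗ t^i) = b ⊗ t^i ⊗ u^j` is a `K`-algebra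
isomorphism `((B ⊗_K K_n)~ ⊗_K K_m) ≅ ((B ⊗_K K_m) ⊗_K K_n)~`, where `~` denotes the
twisted `K`-algebra structure: on `B ⊗_K K_n` via `e1 : c ↦ ∑_{j≤n} D_j(c)·(1 ⊗ u^j)`,
and on `(B ⊗_K K_m) ⊗_K K_n` via `e2 : c ↦ ∑_{j≤n} D_j(c)·(1 ⊗ 1 ⊗ u^j)`. -/
theorem stmt_10 {K B : Type*} [Field K] [CommRing B] [Algebra K B]
    (D : ℕ → K → K)
    (hD0 : D 0 = id)
    (hadd : ∀ i (a b : K), D i (a + b) = D i a + D i b)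
    (hleib : ∀ k (a b : K), D k (a * b) = ∑ i ∈ Finset.range (k + 1), D i a * D (k - i) b)
    (hiter : ∀ i j (a : K), D i (D j a) = (i + j).choose j • D (i + j) a)
    (m n : ℕ)
    (e1 : K →+* (B ⊗[K] TruncP K n))
    (he1 : ∀ c : K, e1 c = ∑ j ∈ Finset.range (n + 1),
      algebraMap K B (D j c) ⊗ₜ[K] tpow K n j)
    (e2 : K →+* ((B ⊗[K] TruncP K m) ⊗[K] TruncP K n))
    (he2 : ∀ c : K, e2 c = ∑ j ∈ Finset.range (n + 1),
      (algebraMap K B (D j c) ⊗ₜ[K] (1 : TruncP K m)) ⊗ₜ[K] tpow K n j) :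
    ∃ θ : ((TwistedT K e1) ⊗[K] TruncP K m) ≃ₐ[K] (TwistedT K e2),
      ∀ (b : B) (i j : ℕ), i ≤ m → j ≤ n →
        θ ((twmk e1 (b ⊗ₜ[K] tpow K n j)) ⊗ₜ[K] tpow K m i)
          = twmk e2 ((b ⊗ₜ[K] tpow K m i) ⊗ₜ[K] tpow K n j) := by
  have hbij : Function.Bijective ⇑(thetaAH he1 he2) := by
    constructor
    · exact Function.LeftInverse.injective (g := ⇑(psiAH m e1)) (psi_theta he1 he2)
    · exact Function.RightInverse.surjective (g := ⇑(psiAH m e1)) (theta_psi he1 he2)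
  refine ⟨AlgEquiv.ofBijective (thetaAH he1 he2) hbij, fun b i j _ _ => ?_⟩
  show thetaAH he1 he2 ((twmk e1 (b ⊗ₜ[K] tpow K n j)) ⊗ₜ[K] tpow K m i)
    = (b ⊗ₜ[K] tpow K m i) ⊗ₜ[K] tpow K n j
  exact theta_gen he1 he2 b i j
end

section
/- Let R be a commutative ring with n commuting iterative higher derivations D_1, …, D_n and let S be a multiplicative subset of R. Then each D_i extends uniquely to a higher derivation D'_i on the localization S⁻¹R (i.e. D'_{i,k}(r/1) = D_{i,k}(r)/1 for all r ∈ R, k ∈ ℕ), and these extensions again commute pairwise: D'_{i,k} ∘ D'_{j,l} = D'_{j,l} ∘ D'_{i,k} for all i, j, k, l. -/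
open Finset

/-- `E` is a higher derivation on the localization `S⁻¹R` extending the `i`-th of the
given higher derivations `D` on `R`. -/
def IsHDExt {R : Type*} [CommRing R] {n : ℕ} (D : Fin n → ℕ → R → R) (S : Submonoid R)
    (i : Fin n) (E : ℕ → Localization S → Localization S) : Prop :=
  E 0 = id ∧
  (∀ k (x y : Localization S), E k (x + y) = E k x + E k y) ∧
  (∀ k (x y : Localization S),
    E k (x * y) = ∑ s ∈ Finset.range (k + 1), E s x * E (k - s) y) ∧
  (∀ k (r : R), E k (algebraMap R (Localization S) r)
    = algebraMap R (Localization S) (D i k r))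

section HDAux

variable {R : Type*} [CommRing R] (S : Submonoid R)

lemma hd_zero (d : ℕ → R → R) (hadd : ∀ k a b, d k (a + b) = d k a + d k b) (k : ℕ) :
    d k 0 = 0 := by
  have h := hadd k 0 0
  rw [add_zero] at h
  exact left_eq_add.mp h

lemma hd_one (d : ℕ → R → R) (h0 : d 0 = id)
    (hleib : ∀ k a b, d k (a * b) = ∑ s ∈ Finset.range (k + 1), d s a * d (k - s) b) :
    ∀ k, 0 < k → d k 1 = 0 := by
  intro k
  induction k using Nat.strong_induction_on with
  | _ k ih =>
    intro hk
    obtain ⟨m, rfl⟩ : ∃ m, k = m + 1 := ⟨k - 1, by omega⟩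
    have h := hleib (m + 1) 1 1
    rw [mul_one, Finset.sum_range_succ, Finset.sum_range_succ'] at h
    have hmid : ∑ i ∈ Finset.range m, d (i + 1) 1 * d (m + 1 - (i + 1)) 1 = 0 := by
      refine Finset.sum_eq_zero fun i hi => ?_
      rw [ih (i + 1) (by simpa using Nat.succ_lt_succ (Finset.mem_range.mp hi)) (Nat.succ_pos i),
        zero_mul]
    rw [hmid, Nat.sub_self, Nat.sub_zero, h0] at h
    simp only [id_eq, zero_add, one_mul, mul_one] at h
    exact (add_left_cancel (a := d (m+1) 1) (b := (0:R)) (c := d (m+1) 1)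
      (by rw [add_zero]; exact h)).symm

/-- The ring hom `R → (S⁻¹R)⟦X⟧` attached to a higher derivation. -/
noncomputable def hdHom (d : ℕ → R → R) (h0 : d 0 = id)
    (hadd : ∀ k a b, d k (a + b) = d k a + d k b)
    (hleib : ∀ k a b, d k (a * b) = ∑ s ∈ Finset.range (k + 1), d s a * d (k - s) b) :
    R →+* PowerSeries (Localization S) where
  toFun r := PowerSeries.mk fun k => algebraMap R (Localization S) (d k r)
  map_one' := by
    ext k
    rw [PowerSeries.coeff_mk, PowerSeries.coeff_one]
    rcases Nat.eq_zero_or_pos k with h | h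
    · subst h
      rw [h0, if_pos rfl]
      simp
    · rw [hd_one d h0 hleib k h, if_neg (by omega)]
      simp
  map_mul' a b := by
    ext k
    rw [PowerSeries.coeff_mk, PowerSeries.coeff_mul, hleib, map_sum,
      Finset.Nat.sum_antidiagonal_eq_sum_range_succ_mk]
    simp [PowerSeries.coeff_mk]
  map_zero' := by
    ext k
    simp [PowerSeries.coeff_mk, hd_zero d hadd k]
  map_add' a b := by
    ext k
    simp [PowerSeries.coeff_mk, hadd]

lemma hdHom_unit (d : ℕ → R → R) (h0 : d 0 = id)
    (hadd : ∀ k a b, d k (a + b) = d k a + d k b)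
    (hleib : ∀ k a b, d k (a * b) = ∑ s ∈ Finset.range (k + 1), d s a * d (k - s) b)
    (s : S) : IsUnit (hdHom S d h0 hadd hleib s) := by
  rw [PowerSeries.isUnit_iff_constantCoeff]
  have hc : PowerSeries.constantCoeff (hdHom S d h0 hadd hleib s)
      = algebraMap R (Localization S) s := by
    show PowerSeries.constantCoeff
      (PowerSeries.mk fun k => algebraMap R (Localization S) (d k s)) = _
    rw [← PowerSeries.coeff_zero_eq_constantCoeff, PowerSeries.coeff_mk, h0]
    rfl
  rw [hc]
  exact IsLocalization.map_units _ s

lemma exists_ext (d : ℕ → R → R) (h0 : d 0 = id)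
    (hadd : ∀ k a b, d k (a + b) = d k a + d k b)
    (hleib : ∀ k a b, d k (a * b) = ∑ s ∈ Finset.range (k + 1), d s a * d (k - s) b) :
    ∃ E : ℕ → Localization S → Localization S,
      E 0 = id ∧
      (∀ k (x y : Localization S), E k (x + y) = E k x + E k y) ∧
      (∀ k (x y : Localization S),
        E k (x * y) = ∑ s ∈ Finset.range (k + 1), E s x * E (k - s) y) ∧
      (∀ k (r : R), E k (algebraMap R (Localization S) r)
        = algebraMap R (Localization S) (d k r)) := by
  set Φ : Localization S →+* PowerSeries (Localization S) :=
    IsLocalization.lift (hdHom_unit S d h0 hadd hleib) with hΦ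
  have hlift : ∀ r : R, Φ (algebraMap R (Localization S) r) = hdHom S d h0 hadd hleib r :=
    fun r => IsLocalization.lift_eq _ r
  refine ⟨fun k x => PowerSeries.coeff k (Φ x), ?_, ?_, ?_, ?_⟩
  · funext x
    have hext : ((PowerSeries.constantCoeff (R := Localization S)).comp Φ)
        = RingHom.id (Localization S) := by
      apply IsLocalization.ringHom_ext S
      ext r
      simp only [RingHom.comp_apply, RingHom.id_apply]
      rw [hlift r]
      show PowerSeries.constantCoeff
        (PowerSeries.mk fun k => algebraMap R (Localization S) (d k r)) = _
      rw [← PowerSeries.coeff_zero_eq_constantCoeff, PowerSeries.coeff_mk, h0]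
      rfl
    have := RingHom.congr_fun hext x
    simpa [PowerSeries.coeff_zero_eq_constantCoeff] using this
  · intro k x y
    dsimp only
    rw [map_add, map_add]
  · intro k x y
    dsimp only
    rw [map_mul, PowerSeries.coeff_mul, Finset.Nat.sum_antidiagonal_eq_sum_range_succ_mk]
  · intro k r
    dsimp only
    rw [hlift r]
    show PowerSeries.coeff k
      (PowerSeries.mk fun k => algebraMap R (Localization S) (d k r)) = _
    rw [PowerSeries.coeff_mk]

lemma ext_unique (d : ℕ → R → R) (h0 : d 0 = id)
    (E E' : ℕ → Localization S → Localization S)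
    (hEl : ∀ k (x y : Localization S),
      E k (x * y) = ∑ s ∈ Finset.range (k + 1), E s x * E (k - s) y)
    (hEr : ∀ k (r : R), E k (algebraMap R (Localization S) r)
      = algebraMap R (Localization S) (d k r))
    (hE'l : ∀ k (x y : Localization S),
      E' k (x * y) = ∑ s ∈ Finset.range (k + 1), E' s x * E' (k - s) y)
    (hE'r : ∀ k (r : R), E' k (algebraMap R (Localization S) r)
      = algebraMap R (Localization S) (d k r)) :
    E = E' := by
  have key : ∀ k, E k = E' k := by
    intro k
    induction k using Nat.strong_induction_on with
    | _ k ih =>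
      funext x
      obtain ⟨⟨r, s⟩, hx⟩ := IsLocalization.surj (M := S) x
      have hd0 : d 0 (s : R) = (s : R) := by rw [h0]; rfl
      have hA : algebraMap R (Localization S) (d k r)
          = ∑ t ∈ Finset.range k, E t x * algebraMap R (Localization S) (d (k - t) s)
            + E k x * algebraMap R (Localization S) (s : R) := by
        rw [← hEr k r, ← hx, hEl k x _, Finset.sum_range_succ]
        simp only [hEr, Nat.sub_self, hd0]
      have hB : algebraMap R (Localization S) (d k r)
          = ∑ t ∈ Finset.range k, E' t x * algebraMap R (Localization S) (d (k - t) s)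
            + E' k x * algebraMap R (Localization S) (s : R) := by
        rw [← hE'r k r, ← hx, hE'l k x _, Finset.sum_range_succ]
        simp only [hE'r, Nat.sub_self, hd0]
      have hsum : ∑ t ∈ Finset.range k, E t x * algebraMap R (Localization S) (d (k - t) s)
          = ∑ t ∈ Finset.range k, E' t x * algebraMap R (Localization S) (d (k - t) s) := by
        refine Finset.sum_congr rfl fun t ht => ?_
        rw [ih t (Finset.mem_range.mp ht)]
      have hcancel : E k x * algebraMap R (Localization S) (s : R)
          = E' k x * algebraMap R (Localization S) (s : R) := by
        have h := hA.symm.trans hB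
        rw [hsum] at h
        exact add_left_cancel h
      have hu : IsUnit (algebraMap R (Localization S) (s : R)) :=
        IsLocalization.map_units _ s
      exact hu.mul_left_cancel
        (by rw [mul_comm, mul_comm (algebraMap R (Localization S) (s : R))]; exact hcancel)
  funext k
  exact key k

lemma ext_comm (di dj : ℕ → R → R) (hi0 : di 0 = id) (hj0 : dj 0 = id)
    (hcm : ∀ k l (a : R), di k (dj l a) = dj l (di k a))
    (Ei Ej : ℕ → Localization S → Localization S)
    (hEia : ∀ k (x y : Localization S), Ei k (x + y) = Ei k x + Ei k y)
    (hEil : ∀ k (x y : Localization S),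
      Ei k (x * y) = ∑ s ∈ Finset.range (k + 1), Ei s x * Ei (k - s) y)
    (hEir : ∀ k (r : R), Ei k (algebraMap R (Localization S) r)
      = algebraMap R (Localization S) (di k r))
    (hEja : ∀ k (x y : Localization S), Ej k (x + y) = Ej k x + Ej k y)
    (hEjl : ∀ k (x y : Localization S),
      Ej k (x * y) = ∑ s ∈ Finset.range (k + 1), Ej s x * Ej (k - s) y)
    (hEjr : ∀ k (r : R), Ej k (algebraMap R (Localization S) r)
      = algebraMap R (Localization S) (dj k r)) :
    ∀ k l (x : Localization S), Ei k (Ej l x) = Ej l (Ei k x) := by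
  have key : ∀ m : ℕ, ∀ k l, k + l = m → ∀ x : Localization S,
      Ei k (Ej l x) = Ej l (Ei k x) := by
    intro m
    induction m using Nat.strong_induction_on with
    | _ m ih =>
      intro k l hkl x
      obtain ⟨⟨r, s⟩, hx⟩ := IsLocalization.surj (M := S) x
      set alg := algebraMap R (Localization S) with halg
      set f : ℕ → ℕ → Localization S :=
        fun a b => Ei a (Ej b x) * alg (di (k - a) (dj (l - b) (s : R))) with hf
      set g : ℕ → ℕ → Localization S :=
        fun a b => Ej b (Ei a x) * alg (dj (l - b) (di (k - a) (s : R))) with hg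
      have hA : Ei k (Ej l (alg r)) =
          ∑ b ∈ Finset.range (l + 1), ∑ a ∈ Finset.range (k + 1), f a b :=
        calc Ei k (Ej l (alg r))
            = ∑ b ∈ Finset.range (l + 1), Ei k (Ej b x * Ej (l - b) (alg (s : R))) := by
              rw [← hx, hEjl l x (alg (s : R))]
              exact map_sum (AddMonoidHom.mk' (Ei k) (hEia k)) _ _
          _ = ∑ b ∈ Finset.range (l + 1), ∑ a ∈ Finset.range (k + 1), f a b := by
              refine Finset.sum_congr rfl fun b hb => ?_
              rw [hEjr, hEil k _ _]
              exact Finset.sum_congr rfl fun a ha => by rw [hEir]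
      have hB : Ej l (Ei k (alg r)) =
          ∑ b ∈ Finset.range (l + 1), ∑ a ∈ Finset.range (k + 1), g a b :=
        calc Ej l (Ei k (alg r))
            = ∑ a ∈ Finset.range (k + 1), Ej l (Ei a x * Ei (k - a) (alg (s : R))) := by
              rw [← hx, hEil k x (alg (s : R))]
              exact map_sum (AddMonoidHom.mk' (Ej l) (hEja l)) _ _
          _ = ∑ a ∈ Finset.range (k + 1), ∑ b ∈ Finset.range (l + 1), g a b := by
              refine Finset.sum_congr rfl fun a ha => ?_
              rw [hEir, hEjl l _ _]
              exact Finset.sum_congr rfl fun b hb => by rw [hEjr]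
          _ = ∑ b ∈ Finset.range (l + 1), ∑ a ∈ Finset.range (k + 1), g a b :=
              Finset.sum_comm
      have hsum : ∑ b ∈ Finset.range (l + 1), ∑ a ∈ Finset.range (k + 1), f a b
          = ∑ b ∈ Finset.range (l + 1), ∑ a ∈ Finset.range (k + 1), g a b := by
        rw [← hA, ← hB, hEjr, hEir, hEir, hEjr, hcm]
      have expand : ∀ h : ℕ → ℕ → Localization S,
          ∑ b ∈ Finset.range (l + 1), ∑ a ∈ Finset.range (k + 1), h a b
            = (∑ b ∈ Finset.range l, ∑ a ∈ Finset.range (k + 1), h a b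
                + ∑ a ∈ Finset.range k, h a l) + h k l := by
        intro h
        rw [Finset.sum_range_succ, Finset.sum_range_succ, ← add_assoc]
      rw [expand f, expand g] at hsum
      have hfg : ∀ a b, a + b < m → f a b = g a b := by
        intro a b hab
        rw [hf, hg]
        dsimp only
        rw [ih (a + b) hab a b rfl x, hcm]
      have h1 : ∑ b ∈ Finset.range l, ∑ a ∈ Finset.range (k + 1), f a b
          = ∑ b ∈ Finset.range l, ∑ a ∈ Finset.range (k + 1), g a b := by
        refine Finset.sum_congr rfl fun b hb => Finset.sum_congr rfl fun a ha => ?_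
        have hbl := Finset.mem_range.mp hb
        have hak := Finset.mem_range.mp ha
        exact hfg a b (by omega)
      have h2 : ∑ a ∈ Finset.range k, f a l = ∑ a ∈ Finset.range k, g a l := by
        refine Finset.sum_congr rfl fun a ha => ?_
        have hak := Finset.mem_range.mp ha
        exact hfg a l (by omega)
      rw [h1, h2] at hsum
      have hfl : f k l = g k l := add_left_cancel hsum
      rw [hf, hg] at hfl
      dsimp only at hfl
      rw [Nat.sub_self, Nat.sub_self, hi0, hj0] at hfl
      simp only [id_eq] at hfl
      have hu : IsUnit (alg (s : R)) := IsLocalization.map_units _ s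
      exact hu.mul_left_cancel (by
        rw [mul_comm, mul_comm (alg (s : R))]
        exact hfl)
  intro k l x
  exact key (k + l) k l rfl x

end HDAux

/-- for a commutative ring `R` with `n` commuting iterative higher
derivations `D_1, …, D_n` and a multiplicative subset `S ⊆ R`, each `D_i` extends
uniquely to a higher derivation on `S⁻¹R`, and these extensions again commute
pairwise. -/
theorem stmt_15 {R : Type*} [CommRing R] {n : ℕ} (D : Fin n → ℕ → R → R)
    (hD0 : ∀ i, D i 0 = id)
    (hadd : ∀ i k (a b : R), D i k (a + b) = D i k a + D i k b)
    (hleib : ∀ i k (a b : R),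
      D i k (a * b) = ∑ s ∈ Finset.range (k + 1), D i s a * D i (k - s) b)
    (hiter : ∀ i k l (a : R), D i k (D i l a) = (k + l).choose l • D i (k + l) a)
    (hcomm : ∀ i j k l (a : R), D i k (D j l a) = D j l (D i k a))
    (S : Submonoid R) :
    (∀ i, ∃! E : ℕ → Localization S → Localization S, IsHDExt D S i E) ∧
    (∀ D' : Fin n → ℕ → Localization S → Localization S,
      (∀ i, IsHDExt D S i (D' i)) →
      ∀ i j k l (x : Localization S), D' i k (D' j l x) = D' j l (D' i k x)) := by
  constructor
  · intro i
    obtain ⟨E, hE⟩ := exists_ext S (D i) (hD0 i) (hadd i) (hleib i)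
    refine ⟨E, hE, fun E' hE' => ?_⟩
    exact ext_unique S (D i) (hD0 i) E' E hE'.2.2.1 hE'.2.2.2 hE.2.2.1 hE.2.2.2
  · intro D' hD' i j k l x
    exact ext_comm S (D i) (D j) (hD0 i) (hD0 j) (hcomm i j) (D' i) (D' j)
      (hD' i).2.1 (hD' i).2.2.1 (hD' i).2.2.2
      (hD' j).2.1 (hD' j).2.2.1 (hD' j).2.2.2 k l x
end

section
/- Let R be a commutative ring with n commuting iterative higher derivations D_1, …, D_n and let m ∈ ℕ. Let R_m = R[t_1, …, t_n]/(t_1, …, t_n)^{m+1} and let e : R → R_m be the twisted homomorphism e(r) = Σ_{|α|≤m} D_α(r) t^α. Then the map ψ : R_m → R_m determined by ψ(r) = e(r) for r ∈ R and ψ(t_i) = t_i for each i is a ring isomorphism, and it is an isomorphism of R-algebras from R_m with its standard R-algebra structure to R̃_m, i.e. ψ(r·x) = e(r)·ψ(x) for all r ∈ R and x ∈ R_m. -/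
open Finset MvPolynomial

/-- The mixed derivative `D_α = D_{1,α_1} ∘ ⋯ ∘ D_{n,α_n}`. -/
def Dcomp {R : Type*} {n : ℕ} (D : Fin n → ℕ → R → R) (α : Fin n → ℕ) : R → R :=
  (List.finRange n).foldr (fun i g => D i (α i) ∘ g) id

/-- The multi-indices `α ∈ ℕ^n` of size `|α| ≤ m`. -/
def mIdx (n m : ℕ) : Finset (Fin n → ℕ) :=
  (Fintype.piFinset fun _ => Finset.range (m + 1)).filter fun α => ∑ i, α i ≤ m

/-- The truncated polynomial ring `R_m = R[t_1, …, t_n]/(t_1, …, t_n)^{m+1}`. -/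
noncomputable abbrev MvTruncIdeal (R : Type*) [CommRing R] (n m : ℕ) :
    Ideal (MvPolynomial (Fin n) R) :=
  (Ideal.span (Set.range (X : Fin n → MvPolynomial (Fin n) R))) ^ (m + 1)

/-- The twisted homomorphism `e(r) = ∑_{|α|≤m} D_α(r) t^α`. -/
noncomputable def twistE {R : Type*} [CommRing R] {n : ℕ} (D : Fin n → ℕ → R → R)
    (m : ℕ) (r : R) : MvPolynomial (Fin n) R ⧸ MvTruncIdeal R n m :=
  ∑ α ∈ mIdx n m,
    Ideal.Quotient.mk (MvTruncIdeal R n m) (C (Dcomp D α r) * ∏ i, X i ^ α i)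

set_option linter.unusedSectionVars false
namespace Stmt16Aux

variable {R : Type*} [CommRing R]

lemma Dcomp_nil (D : Fin 0 → ℕ → R → R) (α : Fin 0 → ℕ) : Dcomp D α = id := by
  simp [Dcomp]

lemma Dcomp_succ {n : ℕ} (D : Fin (n+1) → ℕ → R → R) (α : Fin (n+1) → ℕ) :
    Dcomp D α = D 0 (α 0) ∘ Dcomp (fun j : Fin n => D j.succ) (fun j => α j.succ) := by
  unfold Dcomp
  rw [List.finRange_succ, List.foldr_cons, List.foldr_map]

section Basic

/-- additivity of a single map -/
lemma add_of (f : R → R) (hf : ∀ a b, f (a + b) = f a + f b) : ∀ (z : ℤ) (x : R),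
    f (z • x) = z • f x := fun z x => by
  exact map_zsmul (AddMonoidHom.mk' f hf) z x

lemma Dcomp_add {n : ℕ} (D : Fin n → ℕ → R → R)
    (hadd : ∀ i k (a b : R), D i k (a + b) = D i k a + D i k b)
    (α : Fin n → ℕ) (a b : R) :
    Dcomp D α (a + b) = Dcomp D α a + Dcomp D α b := by
  induction n with
  | zero => simp [Dcomp_nil]
  | succ n ih =>
      rw [Dcomp_succ]
      simp only [Function.comp_apply]
      rw [ih _ (fun i k a b => hadd i.succ k a b), hadd]

/-- Bundled version. -/
def DcompHom {n : ℕ} (D : Fin n → ℕ → R → R)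
    (hadd : ∀ i k (a b : R), D i k (a + b) = D i k a + D i k b)
    (α : Fin n → ℕ) : R →+ R := AddMonoidHom.mk' (Dcomp D α) (Dcomp_add D hadd α)

lemma D_one {n : ℕ} (D : Fin n → ℕ → R → R)
    (hD0 : ∀ i, D i 0 = id)
    (hadd : ∀ i k (a b : R), D i k (a + b) = D i k a + D i k b)
    (hleib : ∀ i k (a b : R),
      D i k (a * b) = ∑ s ∈ Finset.range (k + 1), D i s a * D i (k - s) b)
    (i : Fin n) : ∀ k, k ≠ 0 → D i k (1 : R) = 0 := by
  intro k
  induction k using Nat.strong_induction_on with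
  | _ k ih =>
    intro hk
    obtain ⟨k', rfl⟩ := Nat.exists_eq_succ_of_ne_zero hk
    have h := hleib i (k' + 1) (1 : R) 1
    rw [mul_one] at h
    rw [Finset.sum_range_succ', Finset.sum_range_succ] at h
    have hmid : ∀ s ∈ Finset.range k', D i (s + 1) (1:R) * D i (k' + 1 - (s + 1)) 1 = 0 := by
      intro s hs
      rw [Finset.mem_range] at hs
      rw [ih (s+1) (by omega) (by omega), zero_mul]
    rw [Finset.sum_eq_zero hmid] at h
    simp only [hD0, id_eq, Nat.sub_self, Nat.sub_zero, zero_add, one_mul, mul_one] at h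
    linear_combination -h
    
lemma Dcomp_zero {n : ℕ} (D : Fin n → ℕ → R → R)
    (hadd : ∀ i k (a b : R), D i k (a + b) = D i k a + D i k b)
    (α : Fin n → ℕ) : Dcomp D α (0 : R) = 0 :=
  map_zero (DcompHom D hadd α)

lemma Dcomp_zero_idx {n : ℕ} (D : Fin n → ℕ → R → R)
    (hD0 : ∀ i, D i 0 = id) : Dcomp D 0 = (id : R → R) := by
  induction n with
  | zero => simp [Dcomp_nil]
  | succ n ih =>
      rw [Dcomp_succ]
      simp only [Pi.zero_apply, hD0]
      show (id ∘ Dcomp (fun j : Fin n => D j.succ) fun _ => 0) = id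
      rw [show (fun _ : Fin n => (0:ℕ)) = (0 : Fin n → ℕ) from rfl,
        ih _ (fun i => hD0 i.succ)]
      rfl

lemma Dcomp_one_ne {n : ℕ} (D : Fin n → ℕ → R → R)
    (hD0 : ∀ i, D i 0 = id)
    (hadd : ∀ i k (a b : R), D i k (a + b) = D i k a + D i k b)
    (hleib : ∀ i k (a b : R),
      D i k (a * b) = ∑ s ∈ Finset.range (k + 1), D i s a * D i (k - s) b)
    (α : Fin n → ℕ) (hα : α ≠ 0) : Dcomp D α (1 : R) = 0 := by
  induction n with
  | zero => exact absurd (funext fun i => i.elim0) hα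
  | succ n ih =>
      rw [Dcomp_succ]
      simp only [Function.comp_apply]
      by_cases ht : (fun j : Fin n => α j.succ) = 0
      · have h0 : α 0 ≠ 0 := by
          intro h00
          apply hα
          funext j
          rcases Fin.eq_zero_or_eq_succ j with h | ⟨j', rfl⟩
          · rw [h, h00]; rfl
          · exact congrFun ht j'
        rw [show (fun j : Fin n => α j.succ) = 0 from ht,
          Dcomp_zero_idx _ (fun i => hD0 i.succ)]
        exact D_one D hD0 hadd hleib 0 (α 0) h0
      · rw [ih _ (fun i => hD0 i.succ) (fun i k a b => hadd i.succ k a b)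
          (fun i k a b => hleib i.succ k a b) _ ht]
        exact map_zero (AddMonoidHom.mk' (D 0 (α 0)) (hadd 0 (α 0)))

/-- Splitting a sum over a product box over `Fin (n+1)` coordinates. -/
lemma sum_box_succ {M : Type*} [AddCommMonoid M] {n : ℕ} (B : Fin (n+1) → Finset ℕ)
    (g : (Fin (n+1) → ℕ) → M) :
    ∑ δ ∈ Fintype.piFinset B, g δ
      = ∑ s ∈ B 0, ∑ δ ∈ Fintype.piFinset (fun j : Fin n => B j.succ), g (Fin.cons s δ) := by
  rw [← Finset.sum_product']
  refine Finset.sum_nbij' (fun δ => (δ 0, Fin.tail δ)) (fun p => Fin.cons p.1 p.2) ?_ ?_ ?_ ?_ ?_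
  · intro δ hδ
    rw [Fintype.mem_piFinset] at hδ
    refine Finset.mem_product.mpr ⟨hδ 0, ?_⟩
    rw [Fintype.mem_piFinset]
    exact fun j => hδ j.succ
  · intro p hp
    rw [Finset.mem_product, Fintype.mem_piFinset] at hp
    rw [Fintype.mem_piFinset]
    intro j
    rcases Fin.eq_zero_or_eq_succ j with h | ⟨j', rfl⟩
    · rw [h]; simpa using hp.1
    · simpa using hp.2 j'
  · intro δ hδ
    exact Fin.cons_self_tail δ
  · intro p hp
    simp [Fin.tail_cons]
  · intro δ hδ
    rw [Fin.cons_self_tail]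

/-- The generalized Leibniz rule for mixed derivatives. -/
lemma Dcomp_mul {n : ℕ} (D : Fin n → ℕ → R → R)
    (hadd : ∀ i k (a b : R), D i k (a + b) = D i k a + D i k b)
    (hleib : ∀ i k (a b : R),
      D i k (a * b) = ∑ s ∈ Finset.range (k + 1), D i s a * D i (k - s) b)
    (γ : Fin n → ℕ) (a b : R) :
    Dcomp D γ (a * b)
      = ∑ δ ∈ Fintype.piFinset (fun i => Finset.range (γ i + 1)),
          Dcomp D δ a * Dcomp D (γ - δ) b := by
  induction n with
  | zero =>
      have hu : (Fintype.piFinset fun i : Fin 0 => Finset.range (γ i + 1)) = {0} := by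
        ext δ
        simp only [Fintype.mem_piFinset, Finset.mem_singleton]
        exact ⟨fun _ => Subsingleton.elim δ 0, fun _ i => i.elim0⟩
      rw [hu, Finset.sum_singleton, Dcomp_nil, Dcomp_nil, Dcomp_nil]
      rfl
  | succ n ih =>
      rw [sum_box_succ]
      rw [Dcomp_succ]
      simp only [Function.comp_apply]
      rw [ih (fun j : Fin n => D j.succ) (fun i k a b => hadd i.succ k a b)
        (fun i k a b => hleib i.succ k a b) (fun j => γ j.succ)]
      have hpush : ∀ (s : Finset (Fin n → ℕ)) (f : (Fin n → ℕ) → R),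
          D 0 (γ 0) (∑ x ∈ s, f x) = ∑ x ∈ s, D 0 (γ 0) (f x) :=
        fun s f => map_sum (AddMonoidHom.mk' (D 0 (γ 0)) (hadd 0 (γ 0))) f s
      rw [hpush, Finset.sum_comm]
      refine Finset.sum_congr rfl fun δ hδ => ?_
      rw [hleib 0 (γ 0)]
      refine Finset.sum_congr rfl fun s hs => ?_
      simp only [Dcomp_succ, Function.comp_apply, Fin.cons_zero, Fin.cons_succ, Pi.sub_apply]
      rfl

lemma Dcomp_comm_single {n : ℕ} (E : Fin n → ℕ → R → R) (T : R → R)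
    (hc : ∀ j k (x : R), E j k (T x) = T (E j k x)) (δ : Fin n → ℕ) (x : R) :
    Dcomp E δ (T x) = T (Dcomp E δ x) := by
  induction n with
  | zero => simp [Dcomp_nil]
  | succ n ih =>
      rw [Dcomp_succ]
      simp only [Function.comp_apply]
      rw [ih (fun j => E j.succ) (fun j k x => hc j.succ k x), hc]

/-- Key inversion identity: the convolution of the two families is the identity. -/
lemma Dcomp_inv_sum {n : ℕ} (D E : Fin n → ℕ → R → R)
    (hDadd : ∀ i k (a b : R), D i k (a + b) = D i k a + D i k b)
    (hEadd : ∀ i k (a b : R), E i k (a + b) = E i k a + E i k b)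
    (hcross : ∀ i j k l (x : R), i ≠ j → E i k (D j l x) = D j l (E i k x))
    (hkey : ∀ i k (x : R),
      ∑ s ∈ Finset.range (k + 1), E i (k - s) (D i s x) = if k = 0 then x else 0)
    (γ : Fin n → ℕ) (r : R) :
    ∑ δ ∈ Fintype.piFinset (fun i => Finset.range (γ i + 1)),
        Dcomp E (γ - δ) (Dcomp D δ r)
      = if γ = 0 then r else 0 := by
  induction n with
  | zero =>
      have hu : (Fintype.piFinset fun i : Fin 0 => Finset.range (γ i + 1)) = {0} := by
        ext δ
        simp only [Fintype.mem_piFinset, Finset.mem_singleton]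
        exact ⟨fun _ => Subsingleton.elim δ 0, fun _ i => i.elim0⟩
      rw [hu, Finset.sum_singleton, Dcomp_nil, Dcomp_nil, if_pos (Subsingleton.elim γ 0)]
      rfl
  | succ n ih =>
      rw [sum_box_succ]
      have hterm : ∀ s (δ : Fin n → ℕ),
          Dcomp E (γ - Fin.cons s δ) (Dcomp D (Fin.cons s δ) r)
            = E 0 (γ 0 - s) (D 0 s
                (Dcomp (fun j => E j.succ) ((fun j => γ j.succ) - δ)
                  (Dcomp (fun j => D j.succ) δ r))) := by
        intro s δ
        rw [Dcomp_succ E, Dcomp_succ D]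
        simp only [Function.comp_apply, Fin.cons_zero, Fin.cons_succ, Pi.sub_apply]
        congr 1
        rw [Dcomp_comm_single (fun j => E j.succ) (D 0 s)
          (fun j k x => hcross j.succ 0 k s x (Fin.succ_ne_zero j))]
        rfl
      simp only [hterm]
      have hpush : ∀ s,
          ∑ δ ∈ Fintype.piFinset (fun j : Fin n => Finset.range (γ j.succ + 1)),
            E 0 (γ 0 - s) (D 0 s
              (Dcomp (fun j => E j.succ) ((fun j => γ j.succ) - δ)
                (Dcomp (fun j => D j.succ) δ r)))
          = E 0 (γ 0 - s) (D 0 s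
              (∑ δ ∈ Fintype.piFinset (fun j : Fin n => Finset.range (γ j.succ + 1)),
                Dcomp (fun j => E j.succ) ((fun j => γ j.succ) - δ)
                  (Dcomp (fun j => D j.succ) δ r))) := by
        intro s
        exact (map_sum ((AddMonoidHom.mk' (E 0 (γ 0 - s)) (hEadd 0 (γ 0 - s))).comp
          (AddMonoidHom.mk' (D 0 s) (hDadd 0 s))) _ _).symm
      simp only [hpush]
      rw [ih (fun j => D j.succ) (fun j => E j.succ)
        (fun i k a b => hDadd i.succ k a b) (fun i k a b => hEadd i.succ k a b)
        (fun i j k l x hij => hcross i.succ j.succ k l x (fun h => hij (Fin.succ_injective n h)))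
        (fun i k x => hkey i.succ k x)]
      by_cases ht : (fun j : Fin n => γ j.succ) = 0
      · rw [if_pos ht, hkey 0 (γ 0) r]
        by_cases h0 : γ 0 = 0
        · rw [if_pos h0, if_pos]
          funext j
          rcases Fin.eq_zero_or_eq_succ j with h | ⟨j', rfl⟩
          · rw [h, h0]; rfl
          · exact congrFun ht j'
        · rw [if_neg h0, if_neg]
          intro hγ
          exact h0 (by rw [hγ]; rfl)
      · rw [if_neg ht]
        have hz : ∀ s ∈ Finset.range (γ 0 + 1), E 0 (γ 0 - s) (D 0 s (0 : R)) = 0 := by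
          intro s _
          have h1 : D 0 s (0:R) = 0 := map_zero (AddMonoidHom.mk' (D 0 s) (hDadd 0 s))
          rw [h1]
          exact map_zero (AddMonoidHom.mk' (E 0 (γ 0 - s)) (hEadd 0 (γ 0 - s)))
        rw [Finset.sum_eq_zero hz, if_neg]
        intro hγ
        exact ht (funext fun j => by rw [show γ = 0 from hγ]; rfl)

end Basic

section Quot
variable (n m : ℕ)

lemma zero_mem_mIdx : (0 : Fin n → ℕ) ∈ mIdx n m := by
  simp [mIdx, Fintype.mem_piFinset]

variable {n m}

lemma T_mul (c d : R) (α β : Fin n → ℕ) :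
    Ideal.Quotient.mk (MvTruncIdeal R n m) (C c * ∏ i, X i ^ α i)
      * Ideal.Quotient.mk (MvTruncIdeal R n m) (C d * ∏ i, X i ^ β i)
      = Ideal.Quotient.mk (MvTruncIdeal R n m) (C (c * d) * ∏ i, X i ^ (α i + β i)) := by
  rw [← map_mul]
  congr 1
  rw [map_mul]
  simp only [pow_add, Finset.prod_mul_distrib]
  ring

lemma T_zero (c : R) (γ : Fin n → ℕ) (h : ¬ ∑ i, γ i ≤ m) :
    Ideal.Quotient.mk (MvTruncIdeal R n m) (C c * ∏ i, X i ^ γ i) = 0 := by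
  rw [Ideal.Quotient.eq_zero_iff_mem]
  refine Ideal.mul_mem_left _ _ ?_
  have h1 : (∏ i, X i ^ γ i : MvPolynomial (Fin n) R)
      ∈ (Ideal.span (Set.range (X : Fin n → MvPolynomial (Fin n) R))) ^ (∑ i, γ i) := by
    rw [← Finset.prod_pow_eq_pow_sum]
    exact Ideal.prod_mem_prod fun i _ =>
      Ideal.pow_mem_pow (Ideal.subset_span (Set.mem_range_self i)) _
  exact Ideal.pow_le_pow_right (by omega) h1

/-- Reindexing a double sum over `mIdx` as a sum over total exponents. -/
lemma reindex {M : Type*} [AddCommMonoid M] (F : (Fin n → ℕ) → (Fin n → ℕ) → M)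
    (hF : ∀ α β, ¬ ∑ i, (α i + β i) ≤ m → F α β = 0) :
    ∑ α ∈ mIdx n m, ∑ β ∈ mIdx n m, F α β
      = ∑ γ ∈ mIdx n m, ∑ δ ∈ Fintype.piFinset (fun i => Finset.range (γ i + 1)),
          F δ (γ - δ) := by
  classical
  rw [← Finset.sum_product']
  rw [Finset.sum_sigma']
  rw [show ∑ p ∈ mIdx n m ×ˢ mIdx n m, F p.1 p.2
      = ∑ p ∈ (mIdx n m ×ˢ mIdx n m).filter (fun p => ∑ i, (p.1 i + p.2 i) ≤ m), F p.1 p.2 from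
    (Finset.sum_filter_of_ne fun p _ hne => by
      by_contra hc
      exact hne (hF _ _ hc)).symm]
  refine Finset.sum_nbij' (fun p => ⟨p.1 + p.2, p.1⟩) (fun q => (q.2, q.1 - q.2)) ?_ ?_ ?_ ?_ ?_
  · rintro ⟨α, β⟩ hp
    rw [Finset.mem_filter, Finset.mem_product] at hp
    dsimp only at hp
    obtain ⟨⟨hα, hβ⟩, hs⟩ := hp
    rw [Finset.mem_sigma]
    dsimp only
    constructor
    · simp only [mIdx, Finset.mem_filter, Fintype.mem_piFinset, Finset.mem_range, Pi.add_apply]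
      constructor
      · intro i
        have h2 : α i + β i ≤ ∑ j, (α j + β j) :=
          Finset.single_le_sum (f := fun j => α j + β j) (fun _ _ => Nat.zero_le _)
            (Finset.mem_univ i)
        omega
      · exact hs
    · rw [Fintype.mem_piFinset]
      intro i
      simp only [Pi.add_apply, Finset.mem_range]
      omega
  · rintro ⟨γ, δ⟩ hq
    rw [Finset.mem_sigma] at hq
    dsimp only at hq
    obtain ⟨hγ, hδ⟩ := hq
    simp only [mIdx, Finset.mem_filter, Fintype.mem_piFinset, Finset.mem_range] at hγ
    rw [Fintype.mem_piFinset] at hδ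
    have hle : ∀ i, δ i ≤ γ i := fun i => by
      have h3 := hδ i; rw [Finset.mem_range] at h3; omega
    rw [Finset.mem_filter, Finset.mem_product]
    dsimp only
    have hsum : ∑ i, (δ i + (γ - δ) i) = ∑ i, γ i := by
      refine Finset.sum_congr rfl fun i _ => ?_
      have := hle i
      simp only [Pi.sub_apply]
      omega
    refine ⟨⟨?_, ?_⟩, ?_⟩
    · simp only [mIdx, Finset.mem_filter, Fintype.mem_piFinset, Finset.mem_range]
      refine ⟨fun i => by have := hle i; have := hγ.1 i; omega, ?_⟩
      calc ∑ i, δ i ≤ ∑ i, γ i := Finset.sum_le_sum fun i _ => hle i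
        _ ≤ m := hγ.2
    · simp only [mIdx, Finset.mem_filter, Fintype.mem_piFinset, Finset.mem_range, Pi.sub_apply]
      refine ⟨fun i => by have := hγ.1 i; omega, ?_⟩
      calc ∑ i, (γ i - δ i) ≤ ∑ i, γ i := Finset.sum_le_sum fun i _ => Nat.sub_le _ _
        _ ≤ m := hγ.2
    · rw [hsum]; exact hγ.2
  · rintro ⟨α, β⟩ hp
    dsimp only
    rw [Prod.mk.injEq]
    refine ⟨rfl, ?_⟩
    funext i
    simp only [Pi.sub_apply, Pi.add_apply]
    omega
  · rintro ⟨γ, δ⟩ hq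
    rw [Finset.mem_sigma] at hq
    dsimp only at hq
    obtain ⟨hγ, hδ⟩ := hq
    rw [Fintype.mem_piFinset] at hδ
    have hle : ∀ i, δ i ≤ γ i := fun i => by
      have h3 := hδ i; rw [Finset.mem_range] at h3; omega
    dsimp only
    have h1 : δ + (γ - δ) = γ := funext fun i => by
      simp only [Pi.add_apply, Pi.sub_apply]; have := hle i; omega
    exact Sigma.ext h1 HEq.rfl
  · rintro ⟨α, β⟩ hp
    dsimp only
    congr 1
    funext i
    simp only [Pi.sub_apply, Pi.add_apply]
    omega

end Quot

section Hom
variable {n : ℕ} (D : Fin n → ℕ → R → R) (m : ℕ)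

/-- The twisted homomorphism as a ring homomorphism. -/
noncomputable def truncE
    (hD0 : ∀ i, D i 0 = id)
    (hadd : ∀ i k (a b : R), D i k (a + b) = D i k a + D i k b)
    (hleib : ∀ i k (a b : R),
      D i k (a * b) = ∑ s ∈ Finset.range (k + 1), D i s a * D i (k - s) b) :
    R →+* MvPolynomial (Fin n) R ⧸ MvTruncIdeal R n m where
  toFun := twistE D m
  map_one' := by
    simp only [twistE]
    rw [Finset.sum_eq_single_of_mem 0 (zero_mem_mIdx n m) ?_]
    · rw [Dcomp_zero_idx D hD0]
      simp
    · intro α _ hα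
      rw [Dcomp_one_ne D hD0 hadd hleib α hα]
      simp
  map_zero' := by
    simp only [twistE]
    refine Finset.sum_eq_zero fun α _ => ?_
    rw [Dcomp_zero D hadd]
    simp
  map_add' a b := by
    simp only [twistE]
    rw [← Finset.sum_add_distrib]
    refine Finset.sum_congr rfl fun α _ => ?_
    rw [Dcomp_add D hadd, map_add, add_mul, map_add]
  map_mul' a b := by
    simp only [twistE]
    rw [Finset.sum_mul_sum]
    have h1 : ∀ α β : Fin n → ℕ,
        Ideal.Quotient.mk (MvTruncIdeal R n m) (C (Dcomp D α a) * ∏ i, X i ^ α i)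
          * Ideal.Quotient.mk (MvTruncIdeal R n m) (C (Dcomp D β b) * ∏ i, X i ^ β i)
        = Ideal.Quotient.mk (MvTruncIdeal R n m)
            (C (Dcomp D α a * Dcomp D β b) * ∏ i, X i ^ (α i + β i)) :=
      fun α β => T_mul _ _ _ _
    simp only [h1]
    rw [reindex (fun α β => Ideal.Quotient.mk (MvTruncIdeal R n m)
        (C (Dcomp D α a * Dcomp D β b) * ∏ i, X i ^ (α i + β i)))
      (fun α β h => T_zero _ _ h)]
    refine Finset.sum_congr rfl fun γ _ => ?_
    have h2 : ∀ δ ∈ Fintype.piFinset (fun i => Finset.range (γ i + 1)),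
        Ideal.Quotient.mk (MvTruncIdeal R n m)
            (C (Dcomp D δ a * Dcomp D (γ - δ) b) * ∏ i, X i ^ (δ i + (γ - δ) i))
          = Ideal.Quotient.mk (MvTruncIdeal R n m)
            (C (Dcomp D δ a * Dcomp D (γ - δ) b) * ∏ i, X i ^ γ i) := by
      intro δ hδ
      rw [Fintype.mem_piFinset] at hδ
      congr 1
      congr 1
      refine Finset.prod_congr rfl fun i _ => ?_
      have h3 := hδ i
      rw [Finset.mem_range] at h3
      simp only [Pi.sub_apply]
      congr 1
      omega
    rw [Finset.sum_congr rfl h2, Dcomp_mul D hadd hleib γ a b, map_sum,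
      Finset.sum_mul, map_sum]
  
lemma truncE_apply (hD0 : ∀ i, D i 0 = id)
    (hadd : ∀ i k (a b : R), D i k (a + b) = D i k a + D i k b)
    (hleib : ∀ i k (a b : R),
      D i k (a * b) = ∑ s ∈ Finset.range (k + 1), D i s a * D i (k - s) b) (r : R) :
    truncE D m hD0 hadd hleib r = twistE D m r := rfl

end Hom

section Lift
variable {n : ℕ} (D : Fin n → ℕ → R → R) (m : ℕ)
  (hD0 : ∀ i, D i 0 = id)
  (hadd : ∀ i k (a b : R), D i k (a + b) = D i k a + D i k b)
  (hleib : ∀ i k (a b : R),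
    D i k (a * b) = ∑ s ∈ Finset.range (k + 1), D i s a * D i (k - s) b)

/-- The underlying polynomial-level homomorphism. -/
noncomputable def truncPhi : MvPolynomial (Fin n) R →+* MvPolynomial (Fin n) R ⧸ MvTruncIdeal R n m :=
  eval₂Hom (truncE D m hD0 hadd hleib)
    (fun i => Ideal.Quotient.mk (MvTruncIdeal R n m) (X i))

lemma truncPhi_ker : ∀ a ∈ MvTruncIdeal R n m, truncPhi D m hD0 hadd hleib a = 0 := by
  intro a ha
  have hmap : Ideal.map (truncPhi D m hD0 hadd hleib) (MvTruncIdeal R n m) = ⊥ := by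
    show Ideal.map (truncPhi D m hD0 hadd hleib)
      ((Ideal.span (Set.range (X : Fin n → MvPolynomial (Fin n) R))) ^ (m + 1)) = ⊥
    rw [Ideal.map_pow, Ideal.map_span, ← Set.range_comp]
    have himg : (⇑(truncPhi D m hD0 hadd hleib) ∘ X : Fin n → _)
        = fun i => Ideal.Quotient.mk (MvTruncIdeal R n m) (X i) := by
      funext i
      simp [truncPhi]
    rw [himg, show (Set.range fun i => Ideal.Quotient.mk (MvTruncIdeal R n m) (X i))
        = ⇑(Ideal.Quotient.mk (MvTruncIdeal R n m)) '' Set.range X from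
        Set.range_comp (⇑(Ideal.Quotient.mk (MvTruncIdeal R n m))) X,
      ← Ideal.map_span, ← Ideal.map_pow]
    exact Ideal.map_quotient_self _
  have h2 := Ideal.mem_map_of_mem (truncPhi D m hD0 hadd hleib) ha
  rw [hmap] at h2
  exact Ideal.mem_bot.mp h2

/-- The induced homomorphism on the truncated polynomial ring. -/
noncomputable def truncHom : (MvPolynomial (Fin n) R ⧸ MvTruncIdeal R n m)
    →+* (MvPolynomial (Fin n) R ⧸ MvTruncIdeal R n m) :=
  Ideal.Quotient.lift (MvTruncIdeal R n m) (truncPhi D m hD0 hadd hleib)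
    (truncPhi_ker D m hD0 hadd hleib)

lemma truncHom_mk_C (r : R) :
    truncHom D m hD0 hadd hleib (Ideal.Quotient.mk (MvTruncIdeal R n m) (C r))
      = twistE D m r := by
  rw [truncHom, Ideal.Quotient.lift_mk, truncPhi]
  simp [truncE_apply]

lemma truncHom_mk_X (i : Fin n) :
    truncHom D m hD0 hadd hleib (Ideal.Quotient.mk (MvTruncIdeal R n m) (X i))
      = Ideal.Quotient.mk (MvTruncIdeal R n m) (X i) := by
  rw [truncHom, Ideal.Quotient.lift_mk, truncPhi]
  simp

lemma mk_mono (c : R) (α : Fin n → ℕ) :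
    Ideal.Quotient.mk (MvTruncIdeal R n m) (C c * ∏ i, X i ^ α i)
      = Ideal.Quotient.mk (MvTruncIdeal R n m) (C c)
        * ∏ i, (Ideal.Quotient.mk (MvTruncIdeal R n m) (X i)) ^ α i := by
  rw [map_mul, map_prod]
  simp [map_pow]

lemma truncHom_mk_mono (c : R) (α : Fin n → ℕ) :
    truncHom D m hD0 hadd hleib (Ideal.Quotient.mk (MvTruncIdeal R n m) (C c * ∏ i, X i ^ α i))
      = twistE D m c * Ideal.Quotient.mk (MvTruncIdeal R n m) (∏ i, X i ^ α i) := by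
  rw [mk_mono, map_mul, map_prod, truncHom_mk_C]
  congr 1
  rw [show Ideal.Quotient.mk (MvTruncIdeal R n m) (∏ i, X i ^ α i)
    = ∏ i, (Ideal.Quotient.mk (MvTruncIdeal R n m) (X i)) ^ α i by rw [map_prod]; simp [map_pow]]
  refine Finset.prod_congr rfl fun i _ => ?_
  rw [map_pow, truncHom_mk_X]

end Lift

section Comp
variable {n : ℕ} (D E : Fin n → ℕ → R → R) (m : ℕ)
  (hD0 : ∀ i, D i 0 = id)
  (hDadd : ∀ i k (a b : R), D i k (a + b) = D i k a + D i k b)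
  (hDleib : ∀ i k (a b : R),
    D i k (a * b) = ∑ s ∈ Finset.range (k + 1), D i s a * D i (k - s) b)
  (hE0 : ∀ i, E i 0 = id)
  (hEadd : ∀ i k (a b : R), E i k (a + b) = E i k a + E i k b)
  (hEleib : ∀ i k (a b : R),
    E i k (a * b) = ∑ s ∈ Finset.range (k + 1), E i s a * E i (k - s) b)
  (hcross : ∀ i j k l (x : R), i ≠ j → E i k (D j l x) = D j l (E i k x))
  (hkey : ∀ i k (x : R),
    ∑ s ∈ Finset.range (k + 1), E i (k - s) (D i s x) = if k = 0 then x else 0)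

include hcross hkey in
lemma truncHom_comp_C (r : R) :
    truncHom E m hE0 hEadd hEleib (truncHom D m hD0 hDadd hDleib
        (Ideal.Quotient.mk (MvTruncIdeal R n m) (C r)))
      = Ideal.Quotient.mk (MvTruncIdeal R n m) (C r) := by
  classical
  rw [truncHom_mk_C]
  simp only [twistE]
  rw [map_sum]
  have h1 : ∀ α ∈ mIdx n m,
      truncHom E m hE0 hEadd hEleib (Ideal.Quotient.mk (MvTruncIdeal R n m)
        (C (Dcomp D α r) * ∏ i, X i ^ α i))
      = ∑ β ∈ mIdx n m, Ideal.Quotient.mk (MvTruncIdeal R n m)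
          (C (Dcomp E β (Dcomp D α r)) * ∏ i, X i ^ (α i + β i)) := by
    intro α _
    rw [truncHom_mk_mono]
    simp only [twistE]
    rw [Finset.sum_mul]
    refine Finset.sum_congr rfl fun β _ => ?_
    calc Ideal.Quotient.mk (MvTruncIdeal R n m) (C (Dcomp E β (Dcomp D α r)) * ∏ i, X i ^ β i)
          * Ideal.Quotient.mk (MvTruncIdeal R n m) (∏ i, X i ^ α i)
        = Ideal.Quotient.mk (MvTruncIdeal R n m) (C (Dcomp E β (Dcomp D α r)) * ∏ i, X i ^ β i)
          * Ideal.Quotient.mk (MvTruncIdeal R n m) (C 1 * ∏ i, X i ^ α i) := by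
          rw [map_one, one_mul]
      _ = Ideal.Quotient.mk (MvTruncIdeal R n m)
            (C (Dcomp E β (Dcomp D α r) * 1) * ∏ i, X i ^ (β i + α i)) := T_mul _ _ _ _
      _ = Ideal.Quotient.mk (MvTruncIdeal R n m)
            (C (Dcomp E β (Dcomp D α r)) * ∏ i, X i ^ (α i + β i)) := by
          rw [mul_one]
          congr 1
          refine congrArg _ (Finset.prod_congr rfl fun i _ => ?_)
          rw [Nat.add_comm]
  rw [Finset.sum_congr rfl h1]
  rw [reindex (fun α β => Ideal.Quotient.mk (MvTruncIdeal R n m)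
      (C (Dcomp E β (Dcomp D α r)) * ∏ i, X i ^ (α i + β i)))
    (fun α β h => T_zero _ _ h)]
  have h2 : ∀ γ ∈ mIdx n m,
      ∑ δ ∈ Fintype.piFinset (fun i => Finset.range (γ i + 1)),
        Ideal.Quotient.mk (MvTruncIdeal R n m)
          (C (Dcomp E (γ - δ) (Dcomp D δ r)) * ∏ i, X i ^ (δ i + (γ - δ) i))
      = Ideal.Quotient.mk (MvTruncIdeal R n m)
          (C (if γ = 0 then r else 0) * ∏ i, X i ^ γ i) := by
    intro γ _
    have h3 : ∀ δ ∈ Fintype.piFinset (fun i => Finset.range (γ i + 1)),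
        Ideal.Quotient.mk (MvTruncIdeal R n m)
          (C (Dcomp E (γ - δ) (Dcomp D δ r)) * ∏ i, X i ^ (δ i + (γ - δ) i))
        = Ideal.Quotient.mk (MvTruncIdeal R n m)
          (C (Dcomp E (γ - δ) (Dcomp D δ r)) * ∏ i, X i ^ γ i) := by
      intro δ hδ
      rw [Fintype.mem_piFinset] at hδ
      congr 1
      refine congrArg _ (Finset.prod_congr rfl fun i _ => ?_)
      have h4 := hδ i
      rw [Finset.mem_range] at h4
      simp only [Pi.sub_apply]
      congr 1
      omega
    rw [Finset.sum_congr rfl h3, ← Dcomp_inv_sum D E hDadd hEadd hcross hkey γ r,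
      map_sum, Finset.sum_mul, map_sum]
  rw [Finset.sum_congr rfl h2]
  rw [Finset.sum_eq_single_of_mem 0 (zero_mem_mIdx n m) ?_]
  · simp
  · intro α _ hα
    rw [if_neg hα]
    simp

include hcross hkey in
lemma truncHom_comp_eq_id :
    (truncHom E m hE0 hEadd hEleib).comp (truncHom D m hD0 hDadd hDleib)
      = RingHom.id _ := by
  have hext : ((truncHom E m hE0 hEadd hEleib).comp
        (truncHom D m hD0 hDadd hDleib)).comp
        (Ideal.Quotient.mk (MvTruncIdeal R n m))
      = (RingHom.id (MvPolynomial (Fin n) R ⧸ MvTruncIdeal R n m)).comp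
          (Ideal.Quotient.mk (MvTruncIdeal R n m)) := by
    refine MvPolynomial.ringHom_ext (fun r => ?_) (fun i => ?_)
    · simp only [RingHom.comp_apply, RingHom.id_apply]
      exact truncHom_comp_C D E m hD0 hDadd hDleib hE0 hEadd hEleib hcross hkey r
    · simp only [RingHom.comp_apply, RingHom.id_apply]
      rw [truncHom_mk_X, truncHom_mk_X]
  refine RingHom.ext fun x => ?_
  obtain ⟨p, rfl⟩ := Ideal.Quotient.mk_surjective x
  exact RingHom.congr_fun hext p

end Comp

end Stmt16Aux

/-- for a commutative ring `R` with `n` commuting iterative higher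
derivations and `m ∈ ℕ`, the map `ψ` of `R_m = R[t_1,…,t_n]/(t_1,…,t_n)^{m+1}`
determined by `ψ(r) = e(r)` for `r ∈ R` and `ψ(t_i) = t_i` is a ring isomorphism,
and is an isomorphism of `R`-algebras from `R_m` (standard structure) onto `R̃_m`
(structure via the twisted map `e`), i.e. `ψ(r·x) = e(r)·ψ(x)`. -/
theorem stmt_16 {R : Type*} [CommRing R] {n : ℕ} (D : Fin n → ℕ → R → R)
    (hD0 : ∀ i, D i 0 = id)
    (hadd : ∀ i k (a b : R), D i k (a + b) = D i k a + D i k b)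
    (hleib : ∀ i k (a b : R),
      D i k (a * b) = ∑ s ∈ Finset.range (k + 1), D i s a * D i (k - s) b)
    (hiter : ∀ i k l (a : R), D i k (D i l a) = (k + l).choose l • D i (k + l) a)
    (hcomm : ∀ i j k l (a : R), D i k (D j l a) = D j l (D i k a))
    (m : ℕ) :
    ∃ ψ : (MvPolynomial (Fin n) R ⧸ MvTruncIdeal R n m)
        ≃+* (MvPolynomial (Fin n) R ⧸ MvTruncIdeal R n m),
      (∀ r : R, ψ (Ideal.Quotient.mk (MvTruncIdeal R n m) (C r)) = twistE D m r) ∧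
      (∀ i : Fin n,
        ψ (Ideal.Quotient.mk (MvTruncIdeal R n m) (X i))
          = Ideal.Quotient.mk (MvTruncIdeal R n m) (X i)) ∧
      (∀ (r : R) (x : MvPolynomial (Fin n) R ⧸ MvTruncIdeal R n m),
        ψ (Ideal.Quotient.mk (MvTruncIdeal R n m) (C r) * x) = twistE D m r * ψ x) := by
  classical
  open Stmt16Aux in
  set D' : Fin n → ℕ → R → R := fun i k x => (-1 : ℤ)^k • D i k x with hD'
  have hzsmul : ∀ i k (z : ℤ) (x : R), D i k (z • x) = z • D i k x :=
    fun i k z x => map_zsmul (AddMonoidHom.mk' (D i k) (hadd i k)) z x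
  have hD'0 : ∀ i, D' i 0 = id := by
    intro i
    funext x
    simp [hD', hD0 i]
  have hD'add : ∀ i k (a b : R), D' i k (a + b) = D' i k a + D' i k b := by
    intro i k a b
    simp [hD', hadd, smul_add, mul_add]
  have hD'leib : ∀ i k (a b : R),
      D' i k (a * b) = ∑ s ∈ Finset.range (k + 1), D' i s a * D' i (k - s) b := by
    intro i k a b
    simp only [hD']
    rw [hleib i k a b, Finset.smul_sum]
    refine Finset.sum_congr rfl fun s hs => ?_
    rw [Finset.mem_range] at hs
    have hsgn : ((-1:ℤ))^s * ((-1:ℤ))^(k-s) = (-1:ℤ)^k := by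
      rw [← pow_add]
      congr 1
      omega
    rw [smul_mul_assoc, mul_smul_comm, smul_smul, hsgn]
  have hcross1 : ∀ i j k l (x : R), i ≠ j → D' i k (D j l x) = D j l (D' i k x) := by
    intro i j k l x _
    simp only [hD']
    rw [hcomm i j k l x, hzsmul]
  have hcross2 : ∀ i j k l (x : R), i ≠ j → D i k (D' j l x) = D' j l (D i k x) := by
    intro i j k l x _
    simp only [hD']
    rw [hzsmul, hcomm i j k l x]
  have halt : ∀ k, (∑ s ∈ Finset.range (k+1), ((-1:ℤ))^(k-s) * (k.choose s : ℤ))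
      = if k = 0 then 1 else 0 := by
    intro k
    have h5 := Finset.sum_range_reflect (fun s => ((-1:ℤ))^(k-s) * (k.choose s : ℤ)) (k+1)
    simp only [Nat.add_sub_cancel] at h5
    rw [← h5]
    rw [show (∑ j ∈ Finset.range (k+1), ((-1:ℤ))^(k-(k-j)) * (k.choose (k-j) : ℤ))
        = ∑ j ∈ Finset.range (k+1), ((-1:ℤ))^j * (k.choose j : ℤ) from
      Finset.sum_congr rfl fun j hj => by
        rw [Finset.mem_range] at hj
        rw [show k - (k - j) = j by omega, Nat.choose_symm (show j ≤ k by omega)]]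
    exact Int.alternating_sum_range_choose
  have hfin : ∀ i k (x : R), ((if k = 0 then 1 else 0 : ℤ)) • D i k x
      = if k = 0 then x else 0 := by
    intro i k x
    by_cases hk : k = 0
    · subst hk
      rw [if_pos rfl, if_pos rfl, one_smul, hD0 i]
      rfl
    · rw [if_neg hk, if_neg hk, zero_smul]
  have hkey1 : ∀ i k (x : R),
      ∑ s ∈ Finset.range (k + 1), D' i (k - s) (D i s x) = if k = 0 then x else 0 := by
    intro i k x
    have hterm : ∀ s ∈ Finset.range (k+1),
        D' i (k - s) (D i s x) = (((-1:ℤ))^(k-s) * (k.choose s : ℤ)) • D i k x := by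
      intro s hs
      rw [Finset.mem_range] at hs
      simp only [hD']
      rw [hiter i (k-s) s x, show k - s + s = k by omega, ← natCast_zsmul, smul_smul]
    rw [Finset.sum_congr rfl hterm, ← Finset.sum_smul, halt k, hfin]
  have hkey2 : ∀ i k (x : R),
      ∑ s ∈ Finset.range (k + 1), D i (k - s) (D' i s x) = if k = 0 then x else 0 := by
    intro i k x
    have hterm : ∀ s ∈ Finset.range (k+1),
        D i (k - s) (D' i s x) = (((-1:ℤ))^s * (k.choose s : ℤ)) • D i k x := by
      intro s hs
      rw [Finset.mem_range] at hs
      simp only [hD']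
      rw [hzsmul, hiter i (k-s) s x, show k - s + s = k by omega, ← natCast_zsmul, smul_smul]
    rw [Finset.sum_congr rfl hterm, ← Finset.sum_smul, Int.alternating_sum_range_choose, hfin]
  set ψD := Stmt16Aux.truncHom D m hD0 hadd hleib with hψD
  set ψE := Stmt16Aux.truncHom D' m hD'0 hD'add hD'leib with hψE
  have hid1 : ψE.comp ψD = RingHom.id _ :=
    Stmt16Aux.truncHom_comp_eq_id D D' m hD0 hadd hleib hD'0 hD'add hD'leib hcross1 hkey1
  have hid2 : ψD.comp ψE = RingHom.id _ :=
    Stmt16Aux.truncHom_comp_eq_id D' D m hD'0 hD'add hD'leib hD0 hadd hleib hcross2 hkey2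
  refine ⟨RingEquiv.ofRingHom ψD ψE hid2 hid1, fun r => ?_, fun i => ?_, fun r x => ?_⟩
  · exact Stmt16Aux.truncHom_mk_C D m hD0 hadd hleib r
  · exact Stmt16Aux.truncHom_mk_X D m hD0 hadd hleib i
  · rw [map_mul]
    congr 1
    exact Stmt16Aux.truncHom_mk_C D m hD0 hadd hleib r
end
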